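/- arXiv:1903.07569 — 7 statements merged into one kernel-verified Lean document; each statement's English description precedes it below -/
import Mathlib

section
/- For the poset [m]^n with the componentwise order, the maximum size S(m,n) of an antichain equals the sum over j from 0 to floor(g/m) of (-1)^j * C(n,j) * C(n-1+g-m*j, n-1), where g = floor(n(m-1)/2). -/
/-!
The middle level `{x : ∑ xᵢ = ⌊n(m+1)/2⌋}` of `[m]^n` is an antichain. Conversely `[m]^n` has a
symmetric chain decomposition (de Bruijn–Tengbergen–Kruyswijk): if a chain of `[m]^n` occupies the
ranks `a, …, n(m+1) - a`, its product with `[1, m]` is a grid that splits into hooks, each a chain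
of `[m]^(n+1)` that is again symmetric about the middle rank. Every chain of the decomposition meets
the middle level, and an antichain meets every chain at most once, so no antichain is larger.

Shifting all coordinates down by one, the middle level becomes the set of compositions of
`g = ⌊n(m-1)/2⌋` into `n` parts smaller than `m`. Inclusion–exclusion over the set of parts that are
at least `m`, together with stars and bars, counts them by the alternating sum.
-/

open Finset

namespace Finset

theorem inclusion_exclusion_card_filter_forall_not {α ι : Type*} [Fintype ι] [DecidableEq ι]
    (s : Finset α) (p : ι → α → Prop) [∀ i, DecidablePred (p i)]
    [DecidablePred fun a => ∀ i, ¬ p i a] [∀ t : Finset ι, DecidablePred fun a => ∀ i ∈ t, p i a] :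
    (#(s.filter fun a => ∀ i, ¬ p i a) : ℤ) =
      ∑ t : Finset ι, (-1 : ℤ) ^ #t * #(s.filter fun a => ∀ i ∈ t, p i a) := by
  simp_rw [natCast_card_filter, mul_sum, mul_ite, mul_one, mul_zero]
  rw [sum_comm]
  refine sum_congr rfl fun a _ => ?_
  have hsub :
      univ.filter (fun t : Finset ι => ∀ i ∈ t, p i a) = (univ.filter (p · a)).powerset := by
    ext t
    simp [subset_iff]
  rw [← sum_filter, hsub, sum_powerset_neg_one_pow_card]
  simp [filter_eq_empty_iff]

theorem card_piAntidiag_univ_fin {n : ℕ} (hn : 0 < n) (b : ℕ) :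
    #(piAntidiag (univ : Finset (Fin n)) b) = (n - 1 + b).choose (n - 1) := by
  rw [← map_sym_eq_piAntidiag, card_map, sym_univ, card_univ, Sym.card_sym_eq_choose,
    Fintype.card_fin, Nat.sub_add_comm hn, Nat.choose_symm_add]

theorem card_filter_piAntidiag_forall_le {n : ℕ} (K : Finset (Fin n)) (m b : ℕ) :
    #((piAntidiag univ b).filter fun e : Fin n → ℕ => ∀ i ∈ K, m ≤ e i) =
      if m * #K ≤ b then #(piAntidiag (univ : Finset (Fin n)) (b - m * #K)) else 0 := by
  set c : Fin n → ℕ := fun i => if i ∈ K then m else 0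
  have hc : ∑ i, c i = m * #K := by simp [c, mul_comm]
  split_ifs with hb
  · rw [← card_map (addRightEmbedding c) (s := piAntidiag univ (b - m * #K))]
    congr 1
    ext e
    simp only [mem_filter, mem_piAntidiag, mem_map, addRightEmbedding_apply, mem_univ,
      imp_true_iff, and_true]
    constructor
    · rintro ⟨he, hK⟩
      have hce : ∀ i ∈ univ, c i ≤ e i := fun i _ => by
        by_cases hi : i ∈ K <;> simp [c, hi, hK]
      refine ⟨e - c, ?_, tsub_add_cancel_of_le fun i => hce i (mem_univ i)⟩
      rw [Pi.sub_def, sum_tsub_distrib _ hce, hc, ← he]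
    · rintro ⟨f, hf, rfl⟩
      refine ⟨?_, fun i hi => by simp [c, hi]⟩
      rw [Pi.add_def, sum_add_distrib, hf, hc]
      omega
  · rw [card_eq_zero, filter_eq_empty_iff]
    intro e he hK
    rw [mem_piAntidiag] at he
    have : m * #K ≤ ∑ i, e i := calc
      m * #K = ∑ i ∈ K, m := by simp [mul_comm]
      _ ≤ ∑ i ∈ K, e i := sum_le_sum hK
      _ ≤ ∑ i, e i := sum_le_sum_of_subset (subset_univ K)
    exact hb (this.trans he.1.le)

theorem card_filter_piAntidiag_forall_lt {n : ℕ} (hn : 0 < n) (m b : ℕ) :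
    (#((piAntidiag univ b).filter fun e : Fin n → ℕ => ∀ i, e i < m) : ℤ) =
      ∑ j ∈ (range (n + 1)).filter (m * · ≤ b),
        (-1 : ℤ) ^ j * n.choose j * (n - 1 + b - m * j).choose (n - 1) := by
  have h := inclusion_exclusion_card_filter_forall_not (piAntidiag univ b)
    fun i (e : Fin n → ℕ) => m ≤ e i
  simp only [not_le] at h
  rw [h]
  simp_rw [card_filter_piAntidiag_forall_le]
  rw [← powerset_univ, sum_powerset_apply_card
    (fun j => (-1 : ℤ) ^ j * ((if m * j ≤ b then #(piAntidiag univ (b - m * j)) else 0 : ℕ) : ℤ)),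
    card_univ, Fintype.card_fin, sum_filter]
  refine sum_congr rfl fun j _ => ?_
  split_ifs with hj
  · rw [card_piAntidiag_univ_fin hn, Nat.add_sub_assoc hj, nsmul_eq_mul]
    ring
  · simp

lemma filter_range_mul_le {m n b : ℕ} (hm : 0 < m) (hb : b / m ≤ n) :
    (range (n + 1)).filter (m * · ≤ b) = range (b / m + 1) := by
  ext j
  rw [mem_filter, mem_range, mem_range, Nat.lt_succ_iff, Nat.lt_succ_iff, Nat.le_div_iff_mul_le hm,
    mul_comm j]
  exact ⟨And.right, fun h => ⟨((Nat.le_div_iff_mul_le hm).2 (mul_comm j m ▸ h)).trans hb, h⟩⟩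

end Finset

namespace Sander

def wt {n : ℕ} (x : Fin n → ℕ) : ℕ := ∑ i, x i

def box (m n : ℕ) : Finset (Fin n → ℕ) := Icc 1 fun _ => m

lemma mem_box {m n : ℕ} {x : Fin n → ℕ} : x ∈ box m n ↔ ∀ i, x i ∈ Set.Icc 1 m := by
  simp [box, Pi.le_def, forall_and]

lemma wt_snoc {n : ℕ} (y : Fin n → ℕ) (t : ℕ) : wt (Fin.snoc y t : Fin (n + 1) → ℕ) = wt y + t := by
  simp [wt, Fin.sum_univ_castSucc]

lemma snoc_mem_box {m n : ℕ} {y : Fin n → ℕ} {t : ℕ} :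
    (Fin.snoc y t : Fin (n + 1) → ℕ) ∈ box m (n + 1) ↔ y ∈ box m n ∧ t ∈ Set.Icc 1 m := by
  simp [mem_box, Fin.forall_fin_succ']

lemma snoc_le_snoc {n : ℕ} {y y' : Fin n → ℕ} {t t' : ℕ} (hy : y ≤ y') (ht : t ≤ t') :
    (Fin.snoc y t : Fin (n + 1) → ℕ) ≤ Fin.snoc y' t' := by
  simpa [Pi.le_def, Fin.forall_iff_castSucc, ht] using hy

/-- The `i`-th hook of the grid `[a, M] × [1, m]` runs up the column `a + i` to height `m - i`, then
along the row `m - i`; `hook a m i k` is its point with coordinate sum `k`. -/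
def hook (a m i k : ℕ) : ℕ × ℕ :=
  if k ≤ a + m then (a + i, k - a - i) else (k - m + i, m - i)

section hook

variable {a m i k : ℕ}

lemma hook_fst_mem {M : ℕ} (hi : a + i ≤ M) (hk : k ≤ M + m - i) :
    (hook a m i k).1 ∈ Set.Icc a M := by
  unfold hook; split_ifs <;> simp only [Set.mem_Icc] <;> omega

lemma hook_snd_mem (hi : i < m) (hk : a + i < k) : (hook a m i k).2 ∈ Set.Icc 1 m := by
  unfold hook; split_ifs <;> simp only [Set.mem_Icc] <;> omega

lemma hook_fst_add_snd (hi : i ≤ m) (hk : a + i ≤ k) :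
    (hook a m i k).1 + (hook a m i k).2 = k := by
  unfold hook; split_ifs <;> omega

lemma min_hook (hi : i ≤ m) (hk : a + i ≤ k) :
    min ((hook a m i k).1 - a) (m - (hook a m i k).2) = i := by
  unfold hook; split_ifs <;> omega

lemma monotone_hook : Monotone (hook a m i) := by
  intro k k' hk
  unfold hook; split_ifs <;> simp only [Prod.mk_le_mk] <;> omega

lemma hook_add {w t : ℕ} (hw : a ≤ w) (ht : t ≤ m) :
    hook a m (min (w - a) (m - t)) (w + t) = (w, t) := by
  unfold hook; split_ifs <;> simp only [Prod.mk.injEq] <;> omega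

end hook

/-- `n * (m + 1)` is the sum of the least and the greatest rank `wt` in `[m]^n`, so these ranks are
symmetric about the middle one. -/
def symmRanks (m n a : ℕ) : Set ℕ := Set.Icc a (n * (m + 1) - a)

lemma mem_symmRanks {m n a k : ℕ} : k ∈ symmRanks m n a ↔ a ≤ k ∧ k ≤ n * (m + 1) - a := Iff.rfl

/-- A symmetric chain decomposition of `box m n`, each chain being described through any of its
elements `x`: its ranks are `symmRanks m n (lo x)` and `chain x k` is its element of rank `k`. -/
structure SymmChainDecomp (m n : ℕ) where
  lo : (Fin n → ℕ) → ℕ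
  chain : (Fin n → ℕ) → ℕ → Fin n → ℕ
  wt_mem : ∀ x ∈ box m n, wt x ∈ symmRanks m n (lo x)
  chain_wt : ∀ x ∈ box m n, chain x (wt x) = x
  chain_mem : ∀ x ∈ box m n, ∀ k ∈ symmRanks m n (lo x), chain x k ∈ box m n
  wt_chain : ∀ x ∈ box m n, ∀ k ∈ symmRanks m n (lo x), wt (chain x k) = k
  monotoneOn_chain : ∀ x ∈ box m n, MonotoneOn (chain x) (symmRanks m n (lo x))
  lo_chain : ∀ x ∈ box m n, ∀ k ∈ symmRanks m n (lo x), lo (chain x k) = lo x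
  chain_chain : ∀ x ∈ box m n, ∀ k ∈ symmRanks m n (lo x), chain (chain x k) = chain x

namespace SymmChainDecomp

def zero (m : ℕ) : SymmChainDecomp m 0 where
  lo _ := 0
  chain x _ := x
  wt_mem _ _ := by simp [symmRanks, wt]
  chain_wt _ _ := rfl
  chain_mem _ hx _ _ := hx
  wt_chain _ _ _ hk := by simp_all [symmRanks, wt]
  monotoneOn_chain _ _ := monotoneOn_const
  lo_chain _ _ _ _ := rfl
  chain_chain _ _ _ _ := rfl

variable {m n : ℕ} (D : SymmChainDecomp m n)

/-- In the grid formed by the chain through `Fin.init x` and `[1, m]`, `x` lies on the hook with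
this index. -/
def hookIndex (x : Fin (n + 1) → ℕ) : ℕ :=
  min (wt (Fin.init x) - D.lo (Fin.init x)) (m - x (Fin.last n))

def hookPoint (x : Fin (n + 1) → ℕ) (k : ℕ) : ℕ × ℕ :=
  hook (D.lo (Fin.init x)) m (D.hookIndex x) k

def succLo (x : Fin (n + 1) → ℕ) : ℕ := D.lo (Fin.init x) + D.hookIndex x + 1

def succChain (x : Fin (n + 1) → ℕ) (k : ℕ) : Fin (n + 1) → ℕ :=
  Fin.snoc (D.chain (Fin.init x) (D.hookPoint x k).1) (D.hookPoint x k).2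

variable {D} {x : Fin (n + 1) → ℕ}

lemma init_mem_box (hx : x ∈ box m (n + 1)) :
    Fin.init x ∈ box m n ∧ x (Fin.last n) ∈ Set.Icc 1 m := by
  rw [← Fin.snoc_init_self x, snoc_mem_box] at hx
  simpa using hx

lemma wt_eq_wt_init_add (x : Fin (n + 1) → ℕ) : wt x = wt (Fin.init x) + x (Fin.last n) := by
  conv_lhs => rw [← Fin.snoc_init_self x, wt_snoc]

lemma hookIndex_bounds (hx : x ∈ box m (n + 1)) :
    D.lo (Fin.init x) + D.hookIndex x ≤ n * (m + 1) - D.lo (Fin.init x) ∧ D.hookIndex x < m := by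
  obtain ⟨hy, ht⟩ := init_mem_box hx
  have := D.wt_mem _ hy
  simp only [hookIndex, mem_symmRanks, Set.mem_Icc] at *
  omega

lemma mem_symmRanks_succLo (hx : x ∈ box m (n + 1)) {k : ℕ} :
    k ∈ symmRanks m (n + 1) (D.succLo x) ↔
      D.lo (Fin.init x) + D.hookIndex x < k ∧
        k ≤ n * (m + 1) - D.lo (Fin.init x) + m - D.hookIndex x := by
  have := hookIndex_bounds (D := D) hx
  have hN : (n + 1) * (m + 1) = n * (m + 1) + m + 1 := by ring
  simp only [mem_symmRanks, succLo, hN]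
  omega

lemma hookPoint_fst_mem (hx : x ∈ box m (n + 1)) {k : ℕ}
    (hk : k ∈ symmRanks m (n + 1) (D.succLo x)) :
    (D.hookPoint x k).1 ∈ symmRanks m n (D.lo (Fin.init x)) :=
  hook_fst_mem (hookIndex_bounds hx).1 ((mem_symmRanks_succLo hx).1 hk).2

lemma hookPoint_snd_mem (hx : x ∈ box m (n + 1)) {k : ℕ}
    (hk : k ∈ symmRanks m (n + 1) (D.succLo x)) : (D.hookPoint x k).2 ∈ Set.Icc 1 m :=
  hook_snd_mem (hookIndex_bounds hx).2 ((mem_symmRanks_succLo hx).1 hk).1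

lemma hookPoint_fst_add_snd (hx : x ∈ box m (n + 1)) {k : ℕ}
    (hk : k ∈ symmRanks m (n + 1) (D.succLo x)) : (D.hookPoint x k).1 + (D.hookPoint x k).2 = k :=
  hook_fst_add_snd (hookIndex_bounds hx).2.le ((mem_symmRanks_succLo hx).1 hk).1.le

lemma lo_init_succChain (hx : x ∈ box m (n + 1)) {k : ℕ}
    (hk : k ∈ symmRanks m (n + 1) (D.succLo x)) :
    D.lo (Fin.init (D.succChain x k)) = D.lo (Fin.init x) := by
  rw [succChain, Fin.init_snoc, D.lo_chain _ (init_mem_box hx).1 _ (hookPoint_fst_mem hx hk)]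

lemma hookIndex_succChain (hx : x ∈ box m (n + 1)) {k : ℕ}
    (hk : k ∈ symmRanks m (n + 1) (D.succLo x)) :
    D.hookIndex (D.succChain x k) = D.hookIndex x := by
  have hy := (init_mem_box hx).1
  rw [hookIndex, lo_init_succChain hx hk, succChain, Fin.init_snoc, Fin.snoc_last,
    D.wt_chain _ hy _ (hookPoint_fst_mem hx hk)]
  exact min_hook (hookIndex_bounds hx).2.le ((mem_symmRanks_succLo hx).1 hk).1.le

lemma succChain_wt (hx : x ∈ box m (n + 1)) : D.succChain x (wt x) = x := by
  obtain ⟨hy, ht⟩ := init_mem_box hx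
  have hpt : D.hookPoint x (wt x) = (wt (Fin.init x), x (Fin.last n)) := by
    rw [hookPoint, wt_eq_wt_init_add]
    exact hook_add (D.wt_mem _ hy).1 ht.2
  rw [succChain, hpt, D.chain_wt _ hy, Fin.snoc_init_self]

variable (D) in
def succ : SymmChainDecomp m (n + 1) where
  lo := D.succLo
  chain := D.succChain
  wt_mem x hx := by
    obtain ⟨hy, ht⟩ := init_mem_box hx
    have := D.wt_mem _ hy
    rw [mem_symmRanks_succLo hx, wt_eq_wt_init_add]
    simp only [hookIndex, mem_symmRanks, Set.mem_Icc] at *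
    omega
  chain_wt _ hx := succChain_wt hx
  chain_mem x hx k hk := snoc_mem_box.2
    ⟨D.chain_mem _ (init_mem_box hx).1 _ (hookPoint_fst_mem hx hk), hookPoint_snd_mem hx hk⟩
  wt_chain x hx k hk := by
    rw [succChain, wt_snoc, D.wt_chain _ (init_mem_box hx).1 _ (hookPoint_fst_mem hx hk),
      hookPoint_fst_add_snd hx hk]
  monotoneOn_chain x hx k hk k' hk' hkk' :=
    snoc_le_snoc (D.monotoneOn_chain _ (init_mem_box hx).1 (hookPoint_fst_mem hx hk)
      (hookPoint_fst_mem hx hk') (monotone_hook hkk').1) (monotone_hook hkk').2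
  lo_chain x hx k hk := by
    rw [succLo, succLo, lo_init_succChain hx hk, hookIndex_succChain hx hk]
  chain_chain x hx k hk := by
    funext k'
    rw [succChain, hookPoint, lo_init_succChain hx hk, hookIndex_succChain hx hk, succChain,
      Fin.init_snoc, D.chain_chain _ (init_mem_box hx).1 _ (hookPoint_fst_mem hx hk)]
    rfl

lemma mid_mem_symmRanks {x : Fin n → ℕ} (hx : x ∈ box m n) :
    n * (m + 1) / 2 ∈ symmRanks m n (D.lo x) := by
  have := D.wt_mem x hx
  rw [mem_symmRanks] at *
  omega

lemma le_or_le_of_chain_eq {x y : Fin n → ℕ} (hx : x ∈ box m n) (hy : y ∈ box m n) {k : ℕ}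
    (hkx : k ∈ symmRanks m n (D.lo x)) (hky : k ∈ symmRanks m n (D.lo y))
    (h : D.chain x k = D.chain y k) : x ≤ y ∨ y ≤ x := by
  have hlo : D.lo x = D.lo y := by rw [← D.lo_chain x hx k hkx, h, D.lo_chain y hy k hky]
  have hchain : D.chain x = D.chain y := by
    rw [← D.chain_chain x hx k hkx, h, D.chain_chain y hy k hky]
  have hwx := D.wt_mem x hx
  have hwy : wt y ∈ symmRanks m n (D.lo x) := hlo ▸ D.wt_mem y hy
  rw [← D.chain_wt x hx, ← D.chain_wt y hy, ← hchain]
  rcases le_total (wt x) (wt y) with hxy | hxy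
  · exact .inl (D.monotoneOn_chain x hx hwx hwy hxy)
  · exact .inr (D.monotoneOn_chain x hx hwy hwx hxy)

end SymmChainDecomp

theorem nonempty_symmChainDecomp (m n : ℕ) : Nonempty (SymmChainDecomp m n) := by
  induction n with
  | zero => exact ⟨.zero m⟩
  | succ n ih => exact ⟨ih.some.succ⟩

def middleLevel (m n : ℕ) : Finset (Fin n → ℕ) :=
  (box m n).filter fun x => wt x = n * (m + 1) / 2

theorem card_le_card_middleLevel {m n : ℕ} {A : Finset (Fin n → ℕ)} (hA : A ⊆ box m n)
    (hanti : IsAntichain (· ≤ ·) (A : Set (Fin n → ℕ))) : #A ≤ #(middleLevel m n) := by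
  obtain ⟨D⟩ := nonempty_symmChainDecomp m n
  refine card_le_card_of_injOn (fun x => D.chain x (n * (m + 1) / 2)) (fun x hx => ?_) ?_
  · have hk := D.mid_mem_symmRanks (hA hx)
    exact mem_filter.2 ⟨D.chain_mem x (hA hx) _ hk, D.wt_chain x (hA hx) _ hk⟩
  · intro x hx y hy h
    rcases D.le_or_le_of_chain_eq (hA hx) (hA hy) (D.mid_mem_symmRanks (hA hx))
      (D.mid_mem_symmRanks (hA hy)) h with hxy | hyx
    · exact hanti.eq hx hy hxy
    · exact (hanti.eq hy hx hyx).symm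

lemma eq_of_le_of_wt_eq {n : ℕ} {x y : Fin n → ℕ} (hxy : x ≤ y) (hw : wt x = wt y) : x = y :=
  funext fun i => (sum_eq_sum_iff_of_le fun i _ => hxy i).1 hw i (mem_univ i)

lemma isAntichain_middleLevel (m n : ℕ) :
    IsAntichain (· ≤ ·) (middleLevel m n : Set (Fin n → ℕ)) := fun _ hx _ hy hne hxy =>
  hne (eq_of_le_of_wt_eq hxy (((mem_filter.1 hx).2).trans (mem_filter.1 hy).2.symm))

theorem card_filter_box_wt_eq (m n b : ℕ) :
    #((box m n).filter fun x => wt x = n + b) =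
      #((piAntidiag univ b).filter fun e : Fin n → ℕ => ∀ i, e i < m) := by
  rw [← card_map (addRightEmbedding (1 : Fin n → ℕ)) (s := (piAntidiag univ b).filter _)]
  congr 1
  ext x
  simp only [mem_filter, mem_map, mem_piAntidiag, addRightEmbedding_apply, mem_univ, imp_true_iff,
    and_true, mem_box, Set.mem_Icc]
  constructor
  · rintro ⟨hx, hw⟩
    have h1 : ∀ i ∈ univ, (1 : Fin n → ℕ) i ≤ x i := fun i _ => (hx i).1
    refine ⟨x - 1, ⟨?_, fun i => ?_⟩, tsub_add_cancel_of_le fun i => h1 i (mem_univ i)⟩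
    · rw [Pi.sub_def, sum_tsub_distrib _ h1]
      simp only [wt] at hw
      simp [hw]
    · simp only [Pi.sub_apply, Pi.one_apply]
      have := hx i
      omega
  · rintro ⟨e, ⟨he, hlt⟩, rfl⟩
    refine ⟨fun i => ⟨by simp, by simpa using hlt i⟩, ?_⟩
    simp [wt, sum_add_distrib, he, add_comm]

end Sander

/-- Sander's theorem: the maximum size `S(m,n)` of an antichain in `[m]^n`
(with the componentwise order) equals
`∑_{j=0}^{⌊g/m⌋} (-1)^j C(n,j) C(n-1+g-mj, n-1)` where `g = ⌊n(m-1)/2⌋`. -/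
theorem sander_formula (m n : ℕ) (hm : 0 < m) (hn : 0 < n) (S : ℕ)
    (hS : IsGreatest
      {k : ℕ | ∃ A : Finset (Fin n → ℕ),
        A ⊆ Finset.Icc 1 (fun _ => m) ∧
        IsAntichain (· ≤ ·) (A : Set (Fin n → ℕ)) ∧ A.card = k} S) :
    (S : ℤ) =
      ∑ j ∈ Finset.range (n * (m - 1) / 2 / m + 1),
        (-1 : ℤ) ^ j * (n.choose j) *
          ((n - 1 + n * (m - 1) / 2 - m * j).choose (n - 1)) := by
  obtain ⟨⟨A, hA, hanti, rfl⟩, hmax⟩ := hS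
  have hA_card : #A = #(Sander.middleLevel m n) :=
    le_antisymm (Sander.card_le_card_middleLevel hA hanti)
      (hmax ⟨_, filter_subset _ _, Sander.isAntichain_middleLevel m n, rfl⟩)
  have hmid : n * (m + 1) / 2 = n + n * (m - 1) / 2 := by
    have : n * (m + 1) = n * (m - 1) + 2 * n := by
      obtain ⟨k, rfl⟩ := Nat.exists_eq_add_of_lt hm
      simp only [Nat.add_sub_cancel]
      ring
    omega
  have hg : n * (m - 1) / 2 / m ≤ n :=
    Nat.div_le_of_le_mul <| (Nat.div_le_self _ _).trans <| by
      rw [mul_comm m]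
      exact Nat.mul_le_mul_left n (Nat.sub_le m 1)
  rw [hA_card, Sander.middleLevel, hmid, Sander.card_filter_box_wt_eq,
    card_filter_piAntidiag_forall_lt hn, filter_range_mul_le hm hg]
end

section
/- In the product of chains ∏_{i=1}^n [m_i] with componentwise order, the set A = { x : ∑_i x_i = h }, where h = floor((n + ∑_i m_i)/2), is an antichain of maximum cardinality. -/
/-!
Map each element of an antichain to the middle element of its chain in a symmetric chain
decomposition. Two elements of one chain are comparable, so on an antichain this map is injective,
and the middle layer, itself an antichain because the rank is strictly monotone, is as large as
any antichain.

The box `∏ [m i]` has a symmetric chain decomposition by de Bruijn's induction on the number of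
factors: if `c_0 < ⋯ < c_ℓ` is a symmetric chain of the smaller box, its product with `[k]` splits
into the symmetric chains `{(t + 1, c_j) : j ≤ ℓ - t} ∪ {(i, c_{ℓ-t}) : t + 1 < i ≤ k}`,
`t < min (ℓ + 1) k`; the element `(i, c_j)`, i.e. `Fin.cons i c_j`, lies on the chain with
`t = min (i - 1) (ℓ - j)`.
-/

open Finset

lemma mem_Icc_one_iff_head_tail {n : ℕ} {m x : Fin (n + 1) → ℕ} :
    x ∈ Icc 1 m ↔ x 0 ∈ Icc 1 (m 0) ∧ Fin.tail x ∈ Icc 1 (Fin.tail m) := by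
  simp only [mem_Icc, Pi.le_def, Pi.one_apply, Fin.forall_fin_succ, Fin.tail]
  tauto

lemma tail_mem_Icc_one {n : ℕ} {m x : Fin (n + 1) → ℕ} (hx : x ∈ Icc 1 m) :
    Fin.tail x ∈ Icc 1 (Fin.tail m) :=
  (mem_Icc_one_iff_head_tail.1 hx).2

lemma sum_eq_head_add_sum_tail {n : ℕ} (x : Fin (n + 1) → ℕ) :
    ∑ i, x i = x 0 + ∑ i, Fin.tail x i :=
  Fin.sum_univ_succ x

/-- `chain x` parametrizes, by rank, the chain of the decomposition through `x`: it runs over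
the ranks `bot x, …, top x`, symmetric about `N / 2`. -/
structure SymmChainDecomposition {α : Type*} [Preorder α] (S : Finset α) (rk : α → ℕ)
    (N : ℕ) where
  chain : α → ℕ → α
  bot : α → ℕ
  top : α → ℕ
  bot_add_top : ∀ x ∈ S, bot x + top x = N
  rk_mem_Icc : ∀ x ∈ S, rk x ∈ Set.Icc (bot x) (top x)
  chain_mem : ∀ x ∈ S, ∀ r ∈ Set.Icc (bot x) (top x), chain x r ∈ S
  rk_chain : ∀ x ∈ S, ∀ r ∈ Set.Icc (bot x) (top x), rk (chain x r) = r
  chain_rk : ∀ x ∈ S, chain x (rk x) = x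
  chain_mono : ∀ x ∈ S, MonotoneOn (chain x) (Set.Icc (bot x) (top x))
  chain_chain : ∀ x ∈ S, ∀ r ∈ Set.Icc (bot x) (top x),
    chain (chain x r) = chain x ∧ bot (chain x r) = bot x ∧ top (chain x r) = top x

namespace SymmChainDecomposition

section

variable {α : Type*} [Preorder α] {S : Finset α} {rk : α → ℕ} {N : ℕ}

lemma half_mem_Icc (D : SymmChainDecomposition S rk N) {x : α} (hx : x ∈ S) :
    N / 2 ∈ Set.Icc (D.bot x) (D.top x) := by
  have hsum := D.bot_add_top x hx
  obtain ⟨hbot, htop⟩ := D.rk_mem_Icc x hx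
  constructor <;> omega

lemma le_total_of_chain_eq (D : SymmChainDecomposition S rk N) {x y : α} (hx : x ∈ S)
    (hy : y ∈ S) {r : ℕ}
    (hrx : r ∈ Set.Icc (D.bot x) (D.top x)) (hry : r ∈ Set.Icc (D.bot y) (D.top y))
    (h : D.chain x r = D.chain y r) : x ≤ y ∨ y ≤ x := by
  obtain ⟨hcx, hbx, htx⟩ := D.chain_chain x hx r hrx
  obtain ⟨hcy, hby, hty⟩ := D.chain_chain y hy r hry
  rw [h] at hcx hbx htx
  have hrky : rk y ∈ Set.Icc (D.bot x) (D.top x) := by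
    rw [← hbx, ← htx, hby, hty]
    exact D.rk_mem_Icc y hy
  have hx' : D.chain x (rk x) = x := D.chain_rk x hx
  have hy' : D.chain x (rk y) = y := by rw [← hcx, hcy, D.chain_rk y hy]
  rcases le_total (rk x) (rk y) with hle | hle
  · left
    simpa only [hx', hy'] using D.chain_mono x hx (D.rk_mem_Icc x hx) hrky hle
  · right
    simpa only [hx', hy'] using D.chain_mono x hx hrky (D.rk_mem_Icc x hx) hle

theorem card_le_card_filter_rk_eq_half (D : SymmChainDecomposition S rk N) {B : Finset α}
    (hBS : B ⊆ S)     (hB : IsAntichain (· ≤ ·) (B : Set α)) :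
    B.card ≤ (S.filter fun x => rk x = N / 2).card := by
  refine card_le_card_of_injOn (fun x => D.chain x (N / 2)) (fun x hx => ?_)
    (fun x hx y hy hxy => ?_)
  · have hx := hBS hx
    exact mem_filter.2 ⟨D.chain_mem x hx _ (D.half_mem_Icc hx),
      D.rk_chain x hx _ (D.half_mem_Icc hx)⟩
  · rcases D.le_total_of_chain_eq (hBS hx) (hBS hy) (D.half_mem_Icc (hBS hx))
      (D.half_mem_Icc (hBS hy)) hxy with hle | hle
    · exact hB.eq hx hy hle
    · exact (hB.eq hy hx hle).symm

def ofRkEqZero (h : ∀ x ∈ S, rk x = 0) :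
    SymmChainDecomposition S rk 0 where
  chain x _ := x
  bot _ := 0
  top _ := 0
  bot_add_top _ _ := rfl
  rk_mem_Icc x hx := by simp [h x hx]
  chain_mem x hx _ _ := hx
  rk_chain x hx r hr := by rw [h x hx]; exact (Nat.le_zero.1 hr.2).symm
  chain_rk _ _ := rfl
  chain_mono _ _ := monotoneOn_const
  chain_chain _ _ _ _ := ⟨rfl, rfl, rfl⟩

end

section

variable {n N : ℕ} {m : Fin (n + 1) → ℕ}
  (D : SymmChainDecomposition (Icc 1 (Fin.tail m)) (fun y => ∑ i, y i) N)

def consIndex (x : Fin (n + 1) → ℕ) : ℕ :=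
  min (x 0 - 1) (D.top (Fin.tail x) - ∑ i, Fin.tail x i)

/-- The `max` and `min` switch from the first leg of the L-shaped chain to the second at rank
`D.top (Fin.tail x) + 1`. -/
def consChain (x : Fin (n + 1) → ℕ) (r : ℕ) : Fin (n + 1) → ℕ :=
  Fin.cons (max (D.consIndex x + 1) (r + D.consIndex x - D.top (Fin.tail x)))
    (D.chain (Fin.tail x) (min (r - (D.consIndex x + 1)) (D.top (Fin.tail x) - D.consIndex x)))

def consBot (x : Fin (n + 1) → ℕ) : ℕ := D.bot (Fin.tail x) + D.consIndex x + 1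

def consTop (x : Fin (n + 1) → ℕ) : ℕ := D.top (Fin.tail x) + m 0 - D.consIndex x

lemma bounds_of_mem_Icc {x : Fin (n + 1) → ℕ} (hx : x ∈ Icc 1 m) :
    1 ≤ x 0 ∧ x 0 ≤ m 0 ∧ D.bot (Fin.tail x) + D.top (Fin.tail x) = N ∧
      D.bot (Fin.tail x) ≤ ∑ i, Fin.tail x i ∧ ∑ i, Fin.tail x i ≤ D.top (Fin.tail x) := by
  obtain ⟨hx0, hxt⟩ := mem_Icc_one_iff_head_tail.1 hx
  exact ⟨(mem_Icc.1 hx0).1, (mem_Icc.1 hx0).2, D.bot_add_top _ hxt, D.rk_mem_Icc _ hxt⟩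

variable {D} {x : Fin (n + 1) → ℕ}

lemma consBot_add_consTop (hx : x ∈ Icc 1 m) : D.consBot x + D.consTop x = N + m 0 + 1 := by
  obtain ⟨-, -, hN, -, htop⟩ := D.bounds_of_mem_Icc hx
  simp only [consBot, consTop, consIndex]
  omega

lemma sum_mem_Icc_consBot_consTop (hx : x ∈ Icc 1 m) :
    ∑ i, x i ∈ Set.Icc (D.consBot x) (D.consTop x) := by
  obtain ⟨h1, hm, -, hbot, htop⟩ := D.bounds_of_mem_Icc hx
  rw [sum_eq_head_add_sum_tail, Set.mem_Icc]
  simp only [consBot, consTop, consIndex]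
  omega

lemma tail_param_mem_Icc (hx : x ∈ Icc 1 m) {r : ℕ}
    (hr : r ∈ Set.Icc (D.consBot x) (D.consTop x)) :
    min (r - (D.consIndex x + 1)) (D.top (Fin.tail x) - D.consIndex x) ∈
      Set.Icc (D.bot (Fin.tail x)) (D.top (Fin.tail x)) := by
  obtain ⟨h1, hm, -, hbot, htop⟩ := D.bounds_of_mem_Icc hx
  simp only [consBot, consTop, consIndex, Set.mem_Icc] at hr ⊢
  omega

lemma consChain_mem (hx : x ∈ Icc 1 m) {r : ℕ}
    (hr : r ∈ Set.Icc (D.consBot x) (D.consTop x)) :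
    D.consChain x r ∈ Icc 1 m := by
  rw [mem_Icc_one_iff_head_tail, consChain, Fin.cons_zero, Fin.tail_cons]
  refine ⟨mem_Icc.2 ?_, D.chain_mem _ (tail_mem_Icc_one hx) _ (tail_param_mem_Icc hx hr)⟩
  obtain ⟨h1, hm, -, -, htop⟩ := D.bounds_of_mem_Icc hx
  simp only [consBot, consTop, consIndex, Set.mem_Icc] at hr ⊢
  omega

lemma sum_consChain (hx : x ∈ Icc 1 m) {r : ℕ}
    (hr : r ∈ Set.Icc (D.consBot x) (D.consTop x)) :
    ∑ i, D.consChain x r i = r := by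
  have hq := tail_param_mem_Icc hx hr
  have hsum : ∑ i, D.chain (Fin.tail x) _ i = _ := D.rk_chain _ (tail_mem_Icc_one hx) _ hq
  obtain ⟨-, -, -, -, htop⟩ := D.bounds_of_mem_Icc hx
  rw [consChain, Fin.sum_cons, hsum]
  simp only [consBot, consTop, Set.mem_Icc] at hr
  simp only [consIndex] at hr ⊢
  omega

lemma consChain_sum (hx : x ∈ Icc 1 m) : D.consChain x (∑ i, x i) = x := by
  obtain ⟨h1, -, -, -, htop⟩ := D.bounds_of_mem_Icc hx
  have hhead : max (D.consIndex x + 1) (∑ i, x i + D.consIndex x - D.top (Fin.tail x)) = x 0 := by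
    rw [sum_eq_head_add_sum_tail, consIndex]
    omega
  have htail : min (∑ i, x i - (D.consIndex x + 1)) (D.top (Fin.tail x) - D.consIndex x) =
      ∑ i, Fin.tail x i := by
    rw [sum_eq_head_add_sum_tail, consIndex]
    omega
  rw [consChain, hhead, htail, D.chain_rk _ (tail_mem_Icc_one hx), Fin.cons_self_tail]

lemma monotoneOn_consChain (hx : x ∈ Icc 1 m) :
    MonotoneOn (D.consChain x) (Set.Icc (D.consBot x) (D.consTop x)) := by
  intro r hr r' hr' hle
  rw [consChain, consChain, Fin.cons_le_cons]
  exact ⟨by omega, D.chain_mono _ (tail_mem_Icc_one hx) (tail_param_mem_Icc hx hr)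
    (tail_param_mem_Icc hx hr') (by omega)⟩

lemma consChain_consChain (hx : x ∈ Icc 1 m) {r : ℕ}
    (hr : r ∈ Set.Icc (D.consBot x) (D.consTop x)) :
    D.consChain (D.consChain x r) = D.consChain x ∧
      D.consBot (D.consChain x r) = D.consBot x ∧ D.consTop (D.consChain x r) = D.consTop x := by
  have hxt := tail_mem_Icc_one hx
  have hq := tail_param_mem_Icc hx hr
  obtain ⟨hchain, hbot, htop⟩ := D.chain_chain _ hxt _ hq
  have htail : Fin.tail (D.consChain x r) = D.chain (Fin.tail x) _ := Fin.tail_cons _ _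
  have hindex : D.consIndex (D.consChain x r) = D.consIndex x := by
    have hsum : ∑ i, D.chain (Fin.tail x) _ i = _ := D.rk_chain _ hxt _ hq
    obtain ⟨h1, -, -, -, htop'⟩ := D.bounds_of_mem_Icc hx
    rw [consIndex, htail, htop, hsum, consChain, Fin.cons_zero]
    simp only [consBot, consTop, Set.mem_Icc] at hr
    simp only [consIndex] at hr ⊢
    omega
  refine ⟨funext fun s => ?_, ?_, ?_⟩
  · rw [consChain, hindex, htail, hchain, htop]
    rfl
  · rw [consBot, consBot, hindex, htail, hbot]
  · rw [consTop, consTop, hindex, htail, htop]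

variable (D)

def cons : SymmChainDecomposition (Icc 1 m) (fun y => ∑ i, y i) (N + m 0 + 1) where
  chain := D.consChain
  bot := D.consBot
  top := D.consTop
  bot_add_top _ := consBot_add_consTop
  rk_mem_Icc _ := sum_mem_Icc_consBot_consTop
  chain_mem _ hx _ := consChain_mem hx
  rk_chain _ hx _ := sum_consChain hx
  chain_rk _ := consChain_sum
  chain_mono _ := monotoneOn_consChain
  chain_chain _ hx _ := consChain_consChain hx

end

theorem nonempty_Icc_one :
    ∀ (n : ℕ) (m : Fin n → ℕ),
      Nonempty (SymmChainDecomposition (Icc 1 m) (fun y => ∑ i, y i) (n + ∑ i, m i))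
  | 0, _ => by simpa using ⟨ofRkEqZero fun x _ => Fin.sum_univ_zero x⟩
  | n + 1, m => by
    obtain ⟨D⟩ := nonempty_Icc_one n (Fin.tail m)
    have hN : n + ∑ i, Fin.tail m i + m 0 + 1 = n + 1 + ∑ i, m i := by
      rw [sum_eq_head_add_sum_tail m]
      ring
    exact hN ▸ ⟨D.cons⟩

end SymmChainDecomposition

theorem middle_layer_is_max_antichain_general (n : ℕ) (m : Fin n → ℕ) :
    IsAntichain (· ≤ ·)
      (((Finset.Icc (1 : Fin n → ℕ) m).filter
        (fun x => ∑ i, x i = (n + ∑ i, m i) / 2) : Finset (Fin n → ℕ)) :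
          Set (Fin n → ℕ)) ∧
    ∀ B : Finset (Fin n → ℕ), B ⊆ Finset.Icc (1 : Fin n → ℕ) m →
      IsAntichain (· ≤ ·) (B : Set (Fin n → ℕ)) →
      B.card ≤ ((Finset.Icc (1 : Fin n → ℕ) m).filter
        (fun x => ∑ i, x i = (n + ∑ i, m i) / 2)).card := by
  refine ⟨IsAntichain.of_strictMonoOn_antitoneOn (Fintype.sum_strictMono.strictMonoOn _) ?_, ?_⟩
  · intro x hx y hy _
    exact ((mem_filter.1 hy).2.trans (mem_filter.1 hx).2.symm).le
  · intro B hBS hB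
    obtain ⟨D⟩ := SymmChainDecomposition.nonempty_Icc_one n m
    exact D.card_le_card_filter_rk_eq_half hBS hB

/-- In the product of chains `∏_i [m i]` with the componentwise order, the set of
elements whose coordinate sum equals `h = ⌊(n + ∑ m i)/2⌋` is an antichain of
maximum cardinality. -/
theorem middle_layer_is_max_antichain (n : ℕ) (hn : 0 < n) (m : Fin n → ℕ)
    (hm : ∀ i, 0 < m i) :
    IsAntichain (· ≤ ·)
      (((Finset.Icc (1 : Fin n → ℕ) m).filter
        (fun x => ∑ i, x i = (n + ∑ i, m i) / 2) : Finset (Fin n → ℕ)) :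
          Set (Fin n → ℕ)) ∧
    ∀ B : Finset (Fin n → ℕ), B ⊆ Finset.Icc (1 : Fin n → ℕ) m →
      IsAntichain (· ≤ ·) (B : Set (Fin n → ℕ)) →
      B.card ≤ ((Finset.Icc (1 : Fin n → ℕ) m).filter
        (fun x => ∑ i, x i = (n + ∑ i, m i) / 2)).card :=
  middle_layer_is_max_antichain_general n m
end

section
/- If n(m+1) is even, then S(m,n) = m^{n-1} - 2 * ∑_{r=n-1}^{h-m-1} ∑_{i=0}^{floor((r-n+1)/(m-1))} (-1)^i * C(n-1,i) * C(r-i*m-1, r-i*m-n+1), where h = n(m+1)/2. -/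
/-- The binomial coefficient `C(a,b)` for integer arguments, interpreted as `0`
when `b < 0` or `a < b`. -/
def iChoose (a b : ℤ) : ℤ := if b < 0 ∨ a < b then 0 else (a.toNat.choose b.toNat : ℤ)

/-!
The cube `[m]^n`, graded by the coordinate sum, has ranks `n, …, n m`, symmetric about
`n (m + 1) / 2`, and it has a symmetric chain decomposition, built one coordinate at a time:
the product of a symmetric chain with the chain `[m]` is a grid, which splits into L-shaped
symmetric chains ("hooks"). Two points of an antichain lie on different chains, and every chain
meets the middle layer (rank `h = n (m + 1) / 2`), so the middle layer is a maximum antichain.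

Its size is the number of points of `[m]^(n-1)` of rank in `[h - m, h - 1]` (the last coordinate
is then determined), and `x ↦ m + 1 - x` exchanges the points below and above that window.
Finally, `N_k(r) = Δ_m^k C(· - 1, k - 1) (r - k m)` for the layer sizes `N_k` of `[m]^k`, since
both sides satisfy `f_{k+1}(r) = ∑_{j=1}^m f_k(r - j)`; expanding the iterated forward difference
gives the inclusion–exclusion sum of the statement.
-/

open Finset

namespace CubeAntichain

def cube (m n : ℕ) : Finset (Fin n → ℕ) := Icc 1 fun _ => m

def rank {n : ℕ} (x : Fin n → ℕ) : ℕ := ∑ i, x i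

def layer (m n : ℕ) (r : ℤ) : Finset (Fin n → ℕ) := {x ∈ cube m n | (rank x : ℤ) = r}

variable {m n : ℕ}

lemma mem_layer {r : ℤ} {x : Fin n → ℕ} :
    x ∈ layer m n r ↔ x ∈ cube m n ∧ (rank x : ℤ) = r :=
  mem_filter

lemma mem_cube {x : Fin n → ℕ} : x ∈ cube m n ↔ ∀ i, 1 ≤ x i ∧ x i ≤ m := by
  simp [cube, Pi.le_def, forall_and]

lemma card_cube : #(cube m n) = m ^ n := by simp [cube, Pi.card_Icc]

lemma le_rank {x : Fin n → ℕ} (hx : x ∈ cube m n) : n ≤ rank x := by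
  simpa [rank] using Finset.card_nsmul_le_sum univ x 1 fun i _ => (mem_cube.1 hx i).1

lemma rank_snoc (y : Fin n → ℕ) (a : ℕ) :
    rank (Fin.snoc y a : Fin (n + 1) → ℕ) = rank y + a := by
  simp [rank, Fin.sum_univ_castSucc]

lemma snoc_mem_cube {y : Fin n → ℕ} {a : ℕ} :
    (Fin.snoc y a : Fin (n + 1) → ℕ) ∈ cube m (n + 1) ↔
      y ∈ cube m n ∧ 1 ≤ a ∧ a ≤ m := by
  simp only [cube, mem_Icc, Pi.le_def, Fin.forall_fin_succ', Fin.snoc_castSucc, Fin.snoc_last]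
  tauto

lemma snoc_le_snoc_iff {y y' : Fin n → ℕ} {a a' : ℕ} :
    (Fin.snoc y a : Fin (n + 1) → ℕ) ≤ Fin.snoc y' a' ↔ y ≤ y' ∧ a ≤ a' := by
  simp only [Pi.le_def, Fin.forall_fin_succ', Fin.snoc_castSucc, Fin.snoc_last]

/-- The grid `[0, L] × [0, M)` is the disjoint union of the hooks
`{(t, i) | t ≤ L - i} ∪ {(L - i, v) | i ≤ v < M}`, each a chain of grid ranks
`i, …, L - i + M - 1`. `hookIndex L u v` is the hook through `(u, v)`; `hookPoint L i t` is the
point of hook `i` at distance `t` above its bottom `(0, i)`. -/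
def hookIndex (L u v : ℕ) : ℕ := min v (L - u)

def hookPoint (L i t : ℕ) : ℕ × ℕ := (min t (L - i), i + (t - (L - i)))

lemma hookPoint_hookIndex {L u : ℕ} (v : ℕ) (hu : u ≤ L) :
    hookPoint L (hookIndex L u v) (u + v - hookIndex L u v) = (u, v) := by
  simp only [hookPoint, hookIndex, Prod.mk.injEq]; omega

lemma hookIndex_hookPoint {L i : ℕ} (t : ℕ) (hi : i ≤ L) :
    hookIndex L (hookPoint L i t).1 (hookPoint L i t).2 = i := by
  simp only [hookPoint, hookIndex]; omega

lemma hookPoint_fst_le (L i t : ℕ) : (hookPoint L i t).1 ≤ L - i := min_le_right _ _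

lemma hookPoint_fst_add_snd (L i t : ℕ) : (hookPoint L i t).1 + (hookPoint L i t).2 = i + t := by
  simp only [hookPoint]; omega

lemma hookPoint_snd_lt {L i t M : ℕ} (hi : i < M) (ht : 2 * i + t < L + M) :
    (hookPoint L i t).2 < M := by
  simp only [hookPoint]; omega

lemma monotone_hookPoint (L i : ℕ) : Monotone (hookPoint L i) := fun _ _ hst =>
  ⟨min_le_min_right _ hst, Nat.add_le_add_left (Nat.sub_le_sub_right hst _) _⟩

variable (m) in
/-- The symmetric chain through `x ∈ cube m n` consists of the points `chainAt m n x ρ` of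
rank `ρ`, for `chainBottom m n x ≤ ρ ≤ n (m + 1) - chainBottom m n x`. For `x = snoc y a` it is
a hook in the grid formed by the chain through `y` (position `rank y - chainBottom m n y`) and
the last coordinate (position `a - 1`). -/
def chainBottom : (n : ℕ) → (Fin n → ℕ) → ℕ
  | 0, _ => 0
  | n + 1, x =>
    chainBottom n (Fin.init x) + hookIndex (n * (m + 1) - 2 * chainBottom n (Fin.init x))
      (rank (Fin.init x) - chainBottom n (Fin.init x)) (x (Fin.last n) - 1) + 1

variable (m) in
def chainAt : (n : ℕ) → (Fin n → ℕ) → ℕ → (Fin n → ℕ)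
  | 0, x, _ => x
  | n + 1, x, ρ =>
    let l := chainBottom m n (Fin.init x)
    let L := n * (m + 1) - 2 * l
    let i := hookIndex L (rank (Fin.init x) - l) (x (Fin.last n) - 1)
    let p := hookPoint L i (ρ - (l + i + 1))
    Fin.snoc (chainAt n (Fin.init x) (l + p.1)) (p.2 + 1)

lemma chainBottom_snoc (y : Fin n → ℕ) (a : ℕ) :
    chainBottom m (n + 1) (Fin.snoc y a) =
      chainBottom m n y + hookIndex (n * (m + 1) - 2 * chainBottom m n y)
        (rank y - chainBottom m n y) (a - 1) + 1 := by
  simp [chainBottom]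

lemma chainAt_snoc (y : Fin n → ℕ) (a ρ : ℕ) :
    chainAt m (n + 1) (Fin.snoc y a) ρ =
      let l := chainBottom m n y
      let L := n * (m + 1) - 2 * l
      let i := hookIndex L (rank y - l) (a - 1)
      let p := hookPoint L i (ρ - (l + i + 1))
      Fin.snoc (chainAt m n y (l + p.1)) (p.2 + 1) := by
  simp [chainAt]

lemma chainBottom_le_rank {x : Fin n → ℕ} (hx : x ∈ cube m n) :
    chainBottom m n x ≤ rank x ∧ rank x + chainBottom m n x ≤ n * (m + 1) := by
  induction n with
  | zero => simp [chainBottom, rank]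
  | succ n ih =>
    induction x using Fin.snocCases with | _ y a
    obtain ⟨hy, ha, ham⟩ := snoc_mem_cube.1 hx
    obtain ⟨hly, hyl⟩ := ih hy
    rw [chainBottom_snoc, rank_snoc, hookIndex, add_one_mul]
    omega

lemma chainAt_rank {x : Fin n → ℕ} (hx : x ∈ cube m n) : chainAt m n x (rank x) = x := by
  induction n with
  | zero => rfl
  | succ n ih =>
    induction x using Fin.snocCases with | _ y a
    obtain ⟨hy, ha, -⟩ := snoc_mem_cube.1 hx
    obtain ⟨hly, hyl⟩ := chainBottom_le_rank hy
    simp only [chainAt_snoc, rank_snoc]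
    set l := chainBottom m n y
    set i := hookIndex (n * (m + 1) - 2 * l) (rank y - l) (a - 1)
    have hia : i ≤ a - 1 := min_le_left _ _
    rw [show rank y + a - (l + i + 1) = rank y - l + (a - 1) - i by omega,
      hookPoint_hookIndex _ (by omega), Nat.add_sub_cancel' hly, ih hy, Nat.sub_add_cancel ha]

lemma chainBottom_add_hookPoint_fst_le {y : Fin n → ℕ} (hy : y ∈ cube m n) (i t : ℕ) :
    chainBottom m n y + (hookPoint (n * (m + 1) - 2 * chainBottom m n y) i t).1 +
      chainBottom m n y ≤ n * (m + 1) := by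
  have := hookPoint_fst_le (n * (m + 1) - 2 * chainBottom m n y) i t
  have := chainBottom_le_rank hy
  omega

lemma chainAt_mem_layer {x : Fin n → ℕ} (hx : x ∈ cube m n) {ρ : ℕ}
    (h₁ : chainBottom m n x ≤ ρ) (h₂ : ρ + chainBottom m n x ≤ n * (m + 1)) :
    chainAt m n x ρ ∈ layer m n ρ := by
  induction n generalizing ρ with
  | zero => simp_all [chainAt, mem_layer, rank]
  | succ n ih =>
    induction x using Fin.snocCases with | _ y a
    obtain ⟨hy, ha, ham⟩ := snoc_mem_cube.1 hx
    rw [chainBottom_snoc] at h₁ h₂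
    rw [add_one_mul] at h₂
    simp only [chainAt_snoc]
    set l := chainBottom m n y
    set L := n * (m + 1) - 2 * l with hL
    set i := hookIndex L (rank y - l) (a - 1)
    set p := hookPoint L i (ρ - (l + i + 1))
    obtain ⟨hcube, hrank⟩ :=
      mem_layer.1 (ih hy (ρ := l + p.1) le_self_add (chainBottom_add_hookPoint_fst_le hy _ _))
    have hsum : p.1 + p.2 = i + (ρ - (l + i + 1)) := hookPoint_fst_add_snd ..
    have hia : i ≤ a - 1 := min_le_left _ _
    have hpm : p.2 < m := hookPoint_snd_lt (by omega) (by omega)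
    refine mem_layer.2 ⟨snoc_mem_cube.2 ⟨hcube, by omega, hpm⟩, ?_⟩
    rw [rank_snoc]
    push_cast
    omega

lemma chainBottom_chainAt {x : Fin n → ℕ} (hx : x ∈ cube m n) (ρ : ℕ) :
    chainBottom m n (chainAt m n x ρ) = chainBottom m n x := by
  induction n generalizing ρ with
  | zero => rfl
  | succ n ih =>
    induction x using Fin.snocCases with | _ y a
    have hy := (snoc_mem_cube.1 hx).1
    rw [chainBottom_snoc]
    simp only [chainAt_snoc]
    set l := chainBottom m n y
    set L := n * (m + 1) - 2 * l
    set i := hookIndex L (rank y - l) (a - 1)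
    set p := hookPoint L i (ρ - (l + i + 1))
    have hrange := chainBottom_add_hookPoint_fst_le hy i (ρ - (l + i + 1))
    have hrank := (mem_layer.1 (chainAt_mem_layer hy (ρ := l + p.1) le_self_add hrange)).2
    rw [Nat.cast_inj] at hrank
    have hidx : hookIndex L p.1 p.2 = i :=
      hookIndex_hookPoint _ ((min_le_right _ _).trans tsub_le_self)
    rw [chainBottom_snoc, ih hy, hrank, add_tsub_cancel_left, add_tsub_cancel_right]
    exact congrArg (l + · + 1) hidx

lemma chainAt_chainAt {x : Fin n → ℕ} (hx : x ∈ cube m n) (ρ : ℕ) :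
    chainAt m n (chainAt m n x ρ) = chainAt m n x := by
  induction n generalizing ρ with
  | zero => rfl
  | succ n ih =>
    induction x using Fin.snocCases with | _ y a
    have hy := (snoc_mem_cube.1 hx).1
    funext σ
    simp only [chainAt_snoc]
    set l := chainBottom m n y
    set L := n * (m + 1) - 2 * l
    set i := hookIndex L (rank y - l) (a - 1)
    set p := hookPoint L i (ρ - (l + i + 1))
    have hrange := chainBottom_add_hookPoint_fst_le hy i (ρ - (l + i + 1))
    have hrank := (mem_layer.1 (chainAt_mem_layer hy (ρ := l + p.1) le_self_add hrange)).2
    rw [Nat.cast_inj] at hrank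
    have hbot : chainBottom m n (chainAt m n y (l + p.1)) = l := chainBottom_chainAt hy _
    have hidx : hookIndex L p.1 p.2 = i :=
      hookIndex_hookPoint _ ((min_le_right _ _).trans tsub_le_self)
    rw [hbot, hrank, add_tsub_cancel_left, add_tsub_cancel_right, hidx, ih hy]

lemma monotone_chainAt (x : Fin n → ℕ) : Monotone (chainAt m n x) := by
  induction n with
  | zero => exact monotone_const
  | succ n ih =>
    induction x using Fin.snocCases with | _ y a
    intro ρ σ hρσ
    simp only [chainAt_snoc]
    have hp := monotone_hookPoint (n * (m + 1) - 2 * chainBottom m n y)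
      (hookIndex (n * (m + 1) - 2 * chainBottom m n y) (rank y - chainBottom m n y) (a - 1))
      (Nat.sub_le_sub_right hρσ (chainBottom m (n + 1) (Fin.snoc y a)))
    rw [chainBottom_snoc] at hp
    exact snoc_le_snoc_iff.2 ⟨ih y (Nat.add_le_add_left hp.1 _), Nat.add_le_add_right hp.2 _⟩

lemma le_or_le_of_chainAt_eq {h : ℕ} {x y : Fin n → ℕ}
    (hx : x ∈ cube m n) (hy : y ∈ cube m n) (hxy : chainAt m n x h = chainAt m n y h) :
    x ≤ y ∨ y ≤ x := by
  have hzx : chainAt m n (chainAt m n x h) = chainAt m n x := chainAt_chainAt hx h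
  have hzy : chainAt m n (chainAt m n x h) = chainAt m n y := hxy ▸ chainAt_chainAt hy h
  have hmono := monotone_chainAt (m := m) (chainAt m n x h)
  rw [← chainAt_rank hx, ← chainAt_rank hy, ← hzx, ← hzy]
  exact (le_total (rank x) (rank y)).imp (hmono ·) (hmono ·)

lemma isAntichain_layer (r : ℤ) :
    IsAntichain (· ≤ ·) (layer m n r : Set (Fin n → ℕ)) := by
  intro x hx y hy hne hxy
  have hsum : ∑ i, x i = ∑ i, y i := by
    exact_mod_cast (mem_layer.1 hx).2.trans (mem_layer.1 hy).2.symm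
  exact hne (funext fun i => (sum_eq_sum_iff_of_le fun i _ => hxy i).1 hsum i (mem_univ i))

theorem isGreatest_card_antichain {h : ℕ} (hh : 2 * h = n * (m + 1)) :
    IsGreatest {k | ∃ A : Finset (Fin n → ℕ), A ⊆ cube m n ∧
      IsAntichain (· ≤ ·) (A : Set (Fin n → ℕ)) ∧ #A = k} #(layer m n h) := by
  refine ⟨⟨layer m n h, filter_subset _ _, isAntichain_layer _, rfl⟩, ?_⟩
  rintro _ ⟨A, hA, hanti, rfl⟩
  refine card_le_card_of_injOn (chainAt m n · h) (fun x hx => ?_) (fun x hx y hy hxy => ?_)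
  · have := chainBottom_le_rank (hA hx)
    exact chainAt_mem_layer (hA hx) (by omega) (by omega)
  · rcases le_or_le_of_chainAt_eq (hA hx) (hA hy) hxy with hle | hle
    exacts [hanti.eq hx hy hle, (hanti.eq hy hx hle).symm]

def reflect (m : ℕ) (x : Fin n → ℕ) : Fin n → ℕ := fun i => m + 1 - x i

lemma reflect_mem_cube {x : Fin n → ℕ} (hx : x ∈ cube m n) : reflect m x ∈ cube m n :=
  mem_cube.2 fun i => by have := mem_cube.1 hx i; simp only [reflect]; omega

lemma reflect_reflect {x : Fin n → ℕ} (hx : x ∈ cube m n) : reflect m (reflect m x) = x := by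
  funext i
  have := mem_cube.1 hx i
  simp only [reflect]
  omega

lemma rank_reflect_add_rank {x : Fin n → ℕ} (hx : x ∈ cube m n) :
    rank (reflect m x) + rank x = n * (m + 1) := by
  have (i : Fin n) : reflect m x i + x i = m + 1 := by
    have := mem_cube.1 hx i; simp only [reflect]; omega
  simp [rank, ← sum_add_distrib, this]

lemma card_filter_le_rank (a : ℕ) :
    #{x ∈ cube m n | a ≤ rank x} = #{x ∈ cube m n | rank x + a ≤ n * (m + 1)} := by
  refine card_nbij' (reflect m) (reflect m) ?_ ?_ ?_ ?_ <;> intro x hx <;>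
    simp only [coe_filter, Set.mem_ofPred_eq] at hx ⊢
  · have := rank_reflect_add_rank hx.1
    exact ⟨reflect_mem_cube hx.1, by omega⟩
  · have := rank_reflect_add_rank hx.1
    exact ⟨reflect_mem_cube hx.1, by omega⟩
  · exact reflect_reflect hx.1
  · exact reflect_reflect hx.1

lemma card_filter_rank_le (b : ℕ) :
    #{x ∈ cube m n | rank x ≤ b} = ∑ s ∈ Icc n b, #(layer m n s) := by
  rw [card_eq_sum_card_fiberwise (f := rank) (t := Icc n b)]
  · refine sum_congr rfl fun s hs => congrArg card ?_
    ext x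
    simp only [layer, mem_filter, Nat.cast_inj, and_assoc]
    have := (mem_Icc.1 hs).2
    constructor
    · rintro ⟨hx, -, rfl⟩; exact ⟨hx, rfl⟩
    · rintro ⟨hx, rfl⟩; exact ⟨hx, this, rfl⟩
  · intro x hx
    simp only [coe_filter, Set.mem_ofPred_eq, coe_Icc, Set.mem_Icc] at hx ⊢
    exact ⟨le_rank hx.1, hx.2⟩

lemma card_layer_succ (r : ℤ) :
    #(layer m (n + 1) r) = #{y ∈ cube m n | r - m ≤ rank y ∧ (rank y : ℤ) < r} := by
  refine card_nbij' Fin.init (fun y => Fin.snoc y (r - rank y).toNat) ?_ ?_ ?_ ?_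
  · intro x hx
    induction x using Fin.snocCases with | _ y a
    obtain ⟨hcube, rfl⟩ := mem_layer.1 hx
    obtain ⟨hy, ha, ham⟩ := snoc_mem_cube.1 hcube
    simp only [coe_filter, Set.mem_ofPred_eq, Fin.init_snoc, rank_snoc]
    push_cast
    exact ⟨hy, by omega, by omega⟩
  · intro y hy
    simp only [coe_filter, Set.mem_ofPred_eq] at hy
    refine mem_layer.2 ⟨snoc_mem_cube.2 ⟨hy.1, by omega, by omega⟩, ?_⟩
    rw [rank_snoc]
    push_cast
    omega
  · intro x hx
    induction x using Fin.snocCases with | _ y a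
    obtain ⟨-, hr⟩ := mem_layer.1 hx
    simp only [Fin.init_snoc, ← hr, rank_snoc]
    congr
    omega
  · intro y _
    simp

lemma card_filter_rank_mem_Ico (a : ℤ) (d : ℕ) :
    #{y ∈ cube m n | a ≤ rank y ∧ (rank y : ℤ) < a + d} =
      ∑ j ∈ range d, #(layer m n (a + j)) := by
  rw [card_eq_sum_card_fiberwise (f := fun y => (rank y - a).toNat) (t := range d)]
  · refine sum_congr rfl fun j hj => congrArg card ?_
    ext x
    simp only [layer, mem_filter, and_assoc]
    refine and_congr_right fun _ => ?_
    have := mem_range.1 hj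
    omega
  · intro x hx
    simp only [coe_filter, Set.mem_ofPred_eq, coe_range, Set.mem_Iio] at hx ⊢
    omega

lemma card_layer_succ_eq_sum (r : ℤ) :
    #(layer m (n + 1) r) = ∑ j ∈ range m, #(layer m n (r - m + j)) := by
  rw [card_layer_succ, ← card_filter_rank_mem_Ico]
  simp only [sub_add_cancel]

theorem card_layer_middle {k h : ℕ} (hk : 1 ≤ k) (hh : 2 * h = (k + 1) * (m + 1)) :
    (#(layer m (k + 1) h) : ℤ) =
      m ^ k - 2 * ∑ s ∈ Icc k (h - m - 1), (#(layer m k s) : ℤ) := by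
  have hkm : (k + 1) * (m + 1) = k * (m + 1) + (m + 1) := add_one_mul ..
  have hmk : m + 1 ≤ k * (m + 1) := Nat.le_mul_of_pos_left _ hk
  have hmid : #(layer m (k + 1) h) = #{y ∈ cube m k | h ≤ rank y + m ∧ rank y < h} := by
    rw [card_layer_succ]
    congr 1
    refine filter_congr fun y _ => ?_
    omega
  have hhigh : #{y ∈ cube m k | h ≤ rank y} = #{y ∈ cube m k | rank y ≤ h - m - 1} := by
    rw [card_filter_le_rank]
    congr 1
    refine filter_congr fun y _ => ?_
    omega
  have htotal : #(cube m k) = #{y ∈ cube m k | rank y ≤ h - m - 1} +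
      #{y ∈ cube m k | h ≤ rank y + m ∧ rank y < h} + #{y ∈ cube m k | h ≤ rank y} := by
    rw [card_filter, card_filter, card_filter, card_eq_sum_ones, ← sum_add_distrib,
      ← sum_add_distrib]
    refine sum_congr rfl fun y _ => ?_
    split_ifs <;> omega
  rw [card_cube, hhigh, card_filter_rank_le, ← hmid] at htotal
  rw [← Nat.cast_pow, htotal]
  push_cast
  ring

lemma iChoose_eq_add {a b : ℤ} (hab : b < a) :
    iChoose a b = iChoose (a - 1) (b - 1) + iChoose (a - 1) b := by
  unfold iChoose
  rcases lt_trichotomy b 0 with hb | rfl | hb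
  · rw [if_pos (Or.inl hb), if_pos (Or.inl (by omega)), if_pos (Or.inl hb), add_zero]
  · rw [if_neg (by omega), if_pos (Or.inl (by omega)), if_neg (by omega)]
    simp
  · rw [if_neg (by omega), if_neg (by omega), if_neg (by omega),
      show a.toNat = (a - 1).toNat + 1 by omega, show b.toNat = (b - 1).toNat + 1 by omega,
      Nat.choose_succ_succ]
    push_cast
    ring

/-- `C(s - 1, k - 1)`, the number of compositions of `s` into `k` positive parts when `k ≥ 1`
(for `k = 0` it is `0`, not `[s = 0]`). -/
def numCompositions (k : ℕ) (s : ℤ) : ℤ := iChoose (s - 1) (s - k)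

lemma numCompositions_of_lt {k : ℕ} {s : ℤ} (hs : s < k) : numCompositions k s = 0 :=
  if_pos (Or.inl (by omega))

lemma numCompositions_one (s : ℤ) : numCompositions 1 s = if 1 ≤ s then 1 else 0 := by
  unfold numCompositions iChoose
  split_ifs <;> first | omega | simp

lemma numCompositions_succ_add_one {k : ℕ} (hk : 1 ≤ k) (t : ℤ) :
    numCompositions (k + 1) (t + 1) = numCompositions k t + numCompositions (k + 1) t := by
  unfold numCompositions
  push_cast
  rw [iChoose_eq_add (by omega), add_comm]
  congr 2 <;> ring

lemma fwdDiff_numCompositions {k : ℕ} (hk : 1 ≤ k) (s : ℤ) :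
    fwdDiff (m : ℤ) (numCompositions (k + 1)) s =
      ∑ j ∈ range m, numCompositions k (s + j) := by
  have := sum_range_sub (fun j : ℕ => numCompositions (k + 1) (s + j)) m
  simp only [Nat.cast_zero, add_zero] at this
  rw [fwdDiff, ← this]
  refine sum_congr rfl fun j _ => ?_
  rw [Nat.cast_succ, ← add_assoc, numCompositions_succ_add_one hk, add_sub_cancel_right]

lemma card_layer_one (r : ℤ) : (#(layer m 1 r) : ℤ) = if 1 ≤ r ∧ r ≤ m then 1 else 0 := by
  have hrank (y : Fin 0 → ℕ) : rank y = 0 := by simp [rank]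
  rw [card_layer_succ]
  split_ifs with hr
  · rw [filter_true_of_mem fun y _ => by rw [hrank]; omega, card_cube]
    simp
  · rw [filter_false_of_mem fun y _ => by rw [hrank]; omega]
    simp

theorem card_layer_eq_fwdDiff {k : ℕ} (hk : 1 ≤ k) (r : ℤ) :
    (#(layer m k r) : ℤ) = (fwdDiff (m : ℤ))^[k] (numCompositions k) (r - k * m) := by
  induction k, hk using Nat.le_induction generalizing r with
  | base =>
    rw [card_layer_one]
    simp only [Function.iterate_one, fwdDiff, numCompositions_one]
    split_ifs <;> omega
  | succ k hk ih =>
    have hΔ : fwdDiff (m : ℤ) (numCompositions (k + 1)) =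
        ∑ j ∈ range m, fun s => numCompositions k (s + j) := by
      funext s
      rw [Finset.sum_apply, fwdDiff_numCompositions hk]
    rw [card_layer_succ_eq_sum, Function.iterate_succ_apply, hΔ, fwdDiff_iter_finsetSum,
      Finset.sum_apply]
    push_cast
    refine sum_congr rfl fun j _ => ?_
    rw [fwdDiff_iter_comp_add, ih]
    ring_nf

theorem card_layer_eq_sum {k : ℕ} (hk : 1 ≤ k) (r : ℤ) :
    (#(layer m k r) : ℤ) =
      ∑ i ∈ range (k + 1), (-1) ^ i * (k.choose i : ℤ) * numCompositions k (r - i * m) := by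
  rw [card_layer_eq_fwdDiff hk, fwdDiff_iter_eq_sum_shift, ← sum_range_reflect]
  refine sum_congr rfl fun i hi => ?_
  have hik : i ≤ k := Nat.lt_succ_iff.1 (mem_range.1 hi)
  rw [add_tsub_cancel_right, Nat.sub_sub_self hik, Nat.choose_symm hik, smul_eq_mul, nsmul_eq_mul,
    Nat.cast_sub hik, show r - k * m + (k - i : ℤ) * m = r - i * m by ring]

lemma sum_range_eq_sum_range_of_eq_zero {M : Type*} [AddCommMonoid M] {f : ℕ → M} {a b : ℕ}
    (ha : ∀ i, a ≤ i → f i = 0) (hb : ∀ i, b ≤ i → f i = 0) :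
    ∑ i ∈ range a, f i = ∑ i ∈ range b, f i := by
  wlog hab : a ≤ b generalizing a b
  · exact (this hb ha (le_of_not_ge hab)).symm
  exact sum_subset (range_subset_range.2 hab) fun i _ hi => ha i (by simpa using hi)

theorem card_layer_eq_truncated_sum (hm : 2 ≤ m) {k : ℕ} (hk : 1 ≤ k) (r : ℕ) :
    (#(layer m k r) : ℤ) = ∑ i ∈ range ((r - k) / (m - 1) + 1),
      (-1) ^ i * (k.choose i : ℤ) * numCompositions k (r - i * m) := by
  rw [card_layer_eq_sum hk]
  refine sum_range_eq_sum_range_of_eq_zero (fun i hi => ?_) (fun i hi => ?_)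
  · rw [Nat.choose_eq_zero_of_lt (by omega)]
    simp
  · have h₁ : r - k < i * (m - 1) := (Nat.div_lt_iff_lt_mul (by omega)).1 (by omega)
    have h₂ : i * (m - 1) ≤ i * m := Nat.mul_le_mul_left _ (Nat.sub_le _ _)
    have h₃ : (r : ℤ) < k + ((i * m : ℕ) : ℤ) := mod_cast (by omega : r < k + i * m)
    push_cast at h₃
    rw [numCompositions_of_lt (by linarith)]
    simp

end CubeAntichain

/-- If `n(m+1)` is even then, with `h = n(m+1)/2`, the maximum antichain size
`S(m,n)` in `[m]^n` equals
`m^{n-1} - 2 ∑_{r=n-1}^{h-m-1} ∑_{i=0}^{⌊(r-n+1)/(m-1)⌋}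
  (-1)^i C(n-1,i) C(r-im-1, r-im-n+1)`. -/
theorem max_antichain_even_case (m n : ℕ) (hm : 2 ≤ m) (hn : 2 ≤ n)
    (heven : Even (n * (m + 1))) (S : ℕ)
    (hS : IsGreatest
      {k : ℕ | ∃ A : Finset (Fin n → ℕ),
        A ⊆ Finset.Icc 1 (fun _ => m) ∧
        IsAntichain (· ≤ ·) (A : Set (Fin n → ℕ)) ∧ A.card = k} S) :
    (S : ℤ) =
      (m : ℤ) ^ (n - 1) -
        2 * ∑ r ∈ Finset.Icc (n - 1) (n * (m + 1) / 2 - m - 1),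
          ∑ i ∈ Finset.range ((r + 1 - n) / (m - 1) + 1),
            (-1 : ℤ) ^ i * ((n - 1).choose i) *
              iChoose ((r : ℤ) - i * m - 1) ((r : ℤ) - i * m - n + 1) := by
  obtain ⟨h, hh⟩ := heven
  obtain ⟨k, rfl⟩ : ∃ k, n = k + 1 := ⟨n - 1, by omega⟩
  rw [hS.unique (CubeAntichain.isGreatest_card_antichain (h := h) (by omega)),
    CubeAntichain.card_layer_middle (by omega) (by omega), Nat.add_sub_cancel,
    show (k + 1) * (m + 1) / 2 - m - 1 = h - m - 1 by omega]
  congr 2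
  refine sum_congr rfl fun r _ => ?_
  rw [CubeAntichain.card_layer_eq_truncated_sum hm (by omega),
    show r + 1 - (k + 1) = r - k by omega]
  refine sum_congr rfl fun i _ => ?_
  simp only [CubeAntichain.numCompositions]
  congr 2
  push_cast
  ring
end

section
/- The maximum size of an antichain in [m]^3 with componentwise order equals 3m^2/4 if m is even, and (3m^2+1)/4 if m is odd. -/
/-!
The product of a chain with `[n]` splits into hooks, each a chain whose ranks are symmetric about
the middle rank of the product. Splitting `[m] × [m]` into hooks, and then each hook times `[m]`
into hooks again, gives de Bruijn's symmetric chain decomposition of `[m]^3`, with one chain for each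
`(i, j)` with `1 ≤ i ≤ m` and `1 ≤ j ≤ min m (2(m - i) + 1)`. An antichain meets each chain at most
once, while the middle rank `(3m + 3)/2` meets each chain exactly once; so the middle rank is a
maximum antichain, of size `∑ i, min m (2(m - i) + 1)`.
-/

open Finset

theorem isAntichain_setOf_sum_eq {ι M : Type*} [Fintype ι] [AddCommMonoid M] [PartialOrder M]
    [IsOrderedCancelAddMonoid M] (r : M) :
    IsAntichain (· ≤ ·) {x : ι → M | ∑ i, x i = r} :=
  fun _ hx _ hy hne hle ↦ (Fintype.sum_strictMono (lt_of_le_of_ne hle hne)).ne (hx.trans hy.symm)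

theorem sum_range_two_mul_add_one (h : ℕ) : ∑ k ∈ range h, (2 * k + 1) = h ^ 2 := by
  induction h with
  | zero => rfl
  | succ h ih => rw [sum_range_succ, ih]; ring

theorem sum_range_min_two_mul_add_one (m : ℕ) :
    ∑ k ∈ range m, min m (2 * k + 1) = if Even m then 3 * m ^ 2 / 4 else (3 * m ^ 2 + 1) / 4 := by
  have hsplit : ∑ k ∈ range m, min m (2 * k + 1) = ((m + 1) / 2) ^ 2 + (m - (m + 1) / 2) * m := by
    rw [← sum_range_add_sum_Ico _ (by omega : (m + 1) / 2 ≤ m), ← sum_range_two_mul_add_one,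
      sum_congr rfl fun k hk ↦ min_eq_right (by rw [mem_range] at hk; omega),
      sum_congr rfl fun k hk ↦ min_eq_left (by rw [mem_Ico] at hk; omega), sum_const,
      Nat.card_Ico, smul_eq_mul]
  rw [hsplit]
  obtain ⟨r, rfl | rfl⟩ := Nat.even_or_odd' m
  · rw [if_pos (even_two_mul r), show (2 * r + 1) / 2 = r by omega, show 2 * r - r = r by omega]
    have : 3 * (2 * r) ^ 2 = (r ^ 2 + r * (2 * r)) * 4 := by ring
    omega
  · rw [if_neg (Nat.not_even_two_mul_add_one r), show (2 * r + 1 + 1) / 2 = r + 1 by omega,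
      show 2 * r + 1 - (r + 1) = r by omega]
    have : 3 * (2 * r + 1) ^ 2 + 1 = ((r + 1) ^ 2 + r * (2 * r + 1)) * 4 := by ring
    omega

theorem sum_Icc_min_eq_sum_range (m : ℕ) :
    ∑ i ∈ Icc 1 m, min m (2 * (m - i) + 1) = ∑ k ∈ range m, min m (2 * k + 1) := by
  refine sum_nbij' (fun i ↦ m - i) (fun k ↦ m - k) ?_ ?_ ?_ ?_ fun _ _ ↦ rfl
  all_goals intro i hi; simp only [mem_Icc, mem_range] at hi ⊢; omega

theorem mem_cube {m : ℕ} {x : Fin 3 → ℕ} :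
    x ∈ Icc (1 : Fin 3 → ℕ) (fun _ ↦ m) ↔
      (1 ≤ x 0 ∧ x 0 ≤ m) ∧ (1 ≤ x 1 ∧ x 1 ≤ m) ∧ (1 ≤ x 2 ∧ x 2 ≤ m) := by
  simp only [mem_Icc, Pi.le_def, Pi.one_apply, Fin.forall_fin_succ, Fin.succ_zero_eq_one,
    Fin.succ_one_eq_two, IsEmpty.forall_iff, and_true]
  tauto

/- The `j`-th hook of `[L] × [n]` runs up from `(j, 1)` to `(j, n + 1 - j)` and then right to
`(L, n + 1 - j)`. `(fst n j q, snd n j q)` is its `q`-th point, and `(index n a b, pos n a b)`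
locates `(a, b)`; the rank `a + b` is `index + pos`. -/
namespace Hook

def index (n a b : ℕ) : ℕ := min a (n + 1 - b)

def pos (n a b : ℕ) : ℕ := a + b - index n a b

def fst (n j q : ℕ) : ℕ := j + (q - (n + 1 - j))

def snd (n j q : ℕ) : ℕ := min q (n + 1 - j)

variable {n L a b a' b' j q : ℕ}

theorem index_pos_bounds (ha : 1 ≤ a) (haL : a ≤ L) (hb : 1 ≤ b) (hbn : b ≤ n) :
    1 ≤ index n a b ∧ index n a b ≤ L ∧ index n a b ≤ n ∧
      1 ≤ pos n a b ∧ pos n a b + 2 * index n a b ≤ L + n + 1 := by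
  simp only [index, pos]
  omega

theorem le_of_index_eq_of_pos_le (hb : b ≤ n)
    (hindex : index n a b = index n a' b') (hpos : pos n a b ≤ pos n a' b') :
    a ≤ a' ∧ b ≤ b' := by
  simp only [index, pos] at *
  omega

theorem point_spec (hj : 1 ≤ j) (hjL : j ≤ L) (hjn : j ≤ n) (hq : 1 ≤ q)
    (hqL : q + 2 * j ≤ L + n + 1) :
    1 ≤ fst n j q ∧ fst n j q ≤ L ∧ 1 ≤ snd n j q ∧ snd n j q ≤ n ∧
      index n (fst n j q) (snd n j q) = j ∧ pos n (fst n j q) (snd n j q) = q := by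
  simp only [index, pos, fst, snd]
  omega

theorem fst_add_snd : fst n j q + snd n j q = j + q := by
  simp only [fst, snd]
  omega

end Hook

namespace CubeChains

def chainIndex (m : ℕ) (x : Fin 3 → ℕ) : Σ _ : ℕ, ℕ :=
  ⟨Hook.index m (x 0) (x 1), Hook.index m (Hook.pos m (x 0) (x 1)) (x 2)⟩

def chainIndices (m : ℕ) : Finset (Σ _ : ℕ, ℕ) :=
  (Icc 1 m).sigma fun i ↦ Icc 1 (min m (2 * (m - i) + 1))

def chainPoint (m : ℕ) (c : Σ _ : ℕ, ℕ) (q : ℕ) : Fin 3 → ℕ :=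
  ![Hook.fst m c.1 (Hook.fst m c.2 q), Hook.snd m c.1 (Hook.fst m c.2 q), Hook.snd m c.2 q]

def middlePoint (m : ℕ) (c : Σ _ : ℕ, ℕ) : Fin 3 → ℕ :=
  chainPoint m c ((3 * m + 3) / 2 - c.1 - c.2)

variable {m : ℕ} {x y : Fin 3 → ℕ} {c : Σ _ : ℕ, ℕ} {q : ℕ}

theorem chainIndex_mem_chainIndices (hx : x ∈ Icc 1 fun _ ↦ m) :
    chainIndex m x ∈ chainIndices m := by
  obtain ⟨⟨ha, ham⟩, ⟨hb, hbm⟩, ⟨hc, hcm⟩⟩ := mem_cube.mp hx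
  obtain ⟨hi, him, -, hp, hpi⟩ := Hook.index_pos_bounds ha ham hb hbm
  obtain ⟨hj, hjL, hjm, -⟩ := Hook.index_pos_bounds (L := 2 * (m - Hook.index m (x 0) (x 1)) + 1)
    hp (by omega) hc hcm
  simp only [chainIndex, chainIndices, mem_sigma, mem_Icc]
  omega

theorem le_of_chainIndex_eq (hx : x ∈ Icc 1 fun _ ↦ m) (hxy : chainIndex m x = chainIndex m y)
    (hpos : Hook.pos m (Hook.pos m (x 0) (x 1)) (x 2) ≤ Hook.pos m (Hook.pos m (y 0) (y 1)) (y 2)) :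
    x ≤ y := by
  obtain ⟨-, ⟨-, hxb⟩, -, hxc⟩ := mem_cube.mp hx
  simp only [chainIndex, Sigma.mk.injEq, heq_eq_eq] at hxy
  obtain ⟨hp, h2⟩ := Hook.le_of_index_eq_of_pos_le hxc hxy.2 hpos
  obtain ⟨h0, h1⟩ := Hook.le_of_index_eq_of_pos_le hxb hxy.1 hp
  intro k
  fin_cases k <;> assumption

theorem le_total_of_chainIndex_eq (hx : x ∈ Icc 1 fun _ ↦ m) (hy : y ∈ Icc 1 fun _ ↦ m)
    (hxy : chainIndex m x = chainIndex m y) : x ≤ y ∨ y ≤ x :=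
  (le_total _ _).imp (le_of_chainIndex_eq hx hxy) (le_of_chainIndex_eq hy hxy.symm)

theorem card_le_card_chainIndices {A : Finset (Fin 3 → ℕ)} (hA : A ⊆ Icc 1 fun _ ↦ m)
    (hAnti : IsAntichain (· ≤ ·) (A : Set (Fin 3 → ℕ))) : #A ≤ #(chainIndices m) :=
  card_le_card_of_injOn (chainIndex m) (fun _ hx ↦ chainIndex_mem_chainIndices (hA hx))
    fun _ hx _ hy hxy ↦ (le_total_of_chainIndex_eq (hA hx) (hA hy) hxy).elim (hAnti.eq hx hy)
      (hAnti.eq' hx hy)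

theorem chainPoint_spec (hc : c ∈ chainIndices m) (hq : 1 ≤ q)
    (hqm : q + 2 * (c.1 + c.2) ≤ 3 * m + 2) :
    chainPoint m c q ∈ (Icc 1 fun _ ↦ m) ∧ chainIndex m (chainPoint m c q) = c ∧
      ∑ k, chainPoint m c q k = c.1 + c.2 + q := by
  obtain ⟨i, j⟩ := c
  simp only [chainIndices, mem_sigma, mem_Icc] at hc hqm
  obtain ⟨⟨hi, him⟩, hj, hjm⟩ := hc
  obtain ⟨hp, hpL, hc, hcm, hjq, -⟩ :=
    Hook.point_spec (n := m) (L := 2 * (m - i) + 1) (q := q) hj (by omega) (by omega) hq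
      (by omega)
  obtain ⟨ha, ham, hb, hbm, hip, hpp⟩ := Hook.point_spec (n := m) (L := m) hi him him hp
    (by omega)
  have hab := Hook.fst_add_snd (n := m) (j := i) (q := Hook.fst m j q)
  have hpc := Hook.fst_add_snd (n := m) (j := j) (q := q)
  simp only [chainPoint, chainIndex, mem_cube, Fin.sum_univ_three, Matrix.cons_val_zero,
    Matrix.cons_val_one, Matrix.cons_val_two, Matrix.head_cons, Matrix.tail_cons, hip, hpp, hjq,
    true_and]
  omega

theorem middlePoint_spec (hc : c ∈ chainIndices m) :
    middlePoint m c ∈ (Icc 1 fun _ ↦ m) ∧ chainIndex m (middlePoint m c) = c ∧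
      ∑ k, middlePoint m c k = (3 * m + 3) / 2 := by
  have hij := mem_sigma.mp hc
  simp only [mem_Icc] at hij
  obtain ⟨hcube, hindex, hsum⟩ :=
    chainPoint_spec (q := (3 * m + 3) / 2 - c.1 - c.2) hc (by omega) (by omega)
  exact ⟨hcube, hindex, by rw [middlePoint, hsum]; omega⟩

theorem card_chainIndices (m : ℕ) :
    #(chainIndices m) = if Even m then 3 * m ^ 2 / 4 else (3 * m ^ 2 + 1) / 4 := by
  rw [chainIndices, card_sigma, ← sum_range_min_two_mul_add_one, ← sum_Icc_min_eq_sum_range]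
  exact sum_congr rfl fun i _ ↦ by rw [Nat.card_Icc, Nat.add_sub_cancel]

end CubeChains

theorem max_antichain_three_general (m : ℕ) :
    IsGreatest
      {k : ℕ | ∃ A : Finset (Fin 3 → ℕ),
        A ⊆ Finset.Icc 1 (fun _ => m) ∧
        IsAntichain (· ≤ ·) (A : Set (Fin 3 → ℕ)) ∧ A.card = k}
      (if Even m then 3 * m ^ 2 / 4 else (3 * m ^ 2 + 1) / 4) := by
  open CubeChains in
  rw [← card_chainIndices m]
  refine ⟨⟨(chainIndices m).image (middlePoint m), ?_, ?_, ?_⟩, ?_⟩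
  · intro x hx
    obtain ⟨c, hc, rfl⟩ := mem_image.mp hx
    exact (middlePoint_spec hc).1
  · refine (isAntichain_setOf_sum_eq ((3 * m + 3) / 2)).subset fun x hx ↦ ?_
    obtain ⟨c, hc, rfl⟩ := mem_image.mp hx
    exact (middlePoint_spec hc).2.2
  · refine card_image_of_injOn fun c hc d hd hcd ↦ ?_
    rw [← (middlePoint_spec hc).2.1, hcd, (middlePoint_spec hd).2.1]
  · rintro _ ⟨A, hA, hAnti, rfl⟩
    exact card_le_card_chainIndices hA hAnti

/-- The maximum size of an antichain in `[m]^3` with the componentwise order is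
`3m²/4` when `m` is even and `(3m²+1)/4` when `m` is odd. -/
theorem max_antichain_three (m : ℕ) (hm : 0 < m) :
    IsGreatest
      {k : ℕ | ∃ A : Finset (Fin 3 → ℕ),
        A ⊆ Finset.Icc 1 (fun _ => m) ∧
        IsAntichain (· ≤ ·) (A : Set (Fin 3 → ℕ)) ∧ A.card = k}
      (if Even m then 3 * m ^ 2 / 4 else (3 * m ^ 2 + 1) / 4) :=
  max_antichain_three_general m
end

section
/- The maximum size of an antichain in [m]^4 with componentwise order equals (2m^3 + m)/3. -/
/-!
`[m]⁴ = [m]² × [m]²` has a symmetric chain decomposition (de Bruijn–Tengbergen–Kruyswijk):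
the product of two symmetric chains of lengths `p` and `q` is the grid `[0, p] × [0, q]`, which
splits into nested hooks, each again a chain symmetric about the middle rank, so symmetric chain
decompositions of two posets multiply. Every symmetric chain meets the middle rank
`Σ xᵢ = 2m + 2` exactly once; sending each point to that element of its chain is injective on
an antichain, so no antichain is larger than the middle layer, which is itself an antichain.
Counting it by the rank `s` of its first two coordinates gives `Σₛ N(s)² = (2m³ + m)/3`, where
`N(s) = min (s - 1) (2m + 1 - s)` is the number of points of `[m]²` with coordinate sum `s`.
-/

open Finset

/- The grid `[0, p] × [0, q]` is the disjoint union of the hooks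
`{j} × [0, q - j] ∪ [j, p] × {q - j}`, `j ≤ min p q`, each running from rank `j` to rank
`p + q - j`. `gridHook q x` is the hook through `x`, and `hookPoint q j r` the point of hook `j`
with coordinate sum `r` (truncated subtraction merges the cases `r ≤ q` and `q ≤ r`). -/
def gridHook (q : ℕ) (x : ℕ × ℕ) : ℕ := min x.1 (q - x.2)

def hookPoint (q j r : ℕ) : ℕ × ℕ := (max j (r + j - q), min (r - j) (q - j))

lemma hookPoint_gridHook {q : ℕ} {x : ℕ × ℕ} (hx : x.2 ≤ q) :
    hookPoint q (gridHook q x) (x.1 + x.2) = x := by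
  ext <;> simp only [hookPoint, gridHook] <;> omega

lemma gridHook_hookPoint {q j r : ℕ} (hjq : j ≤ q) (hjr : j ≤ r) :
    gridHook q (hookPoint q j r) = j := by
  simp only [hookPoint, gridHook]; omega

lemma hookPoint_fst_add_snd {q j r : ℕ} (hjq : j ≤ q) (hjr : j ≤ r) :
    (hookPoint q j r).1 + (hookPoint q j r).2 = r := by
  simp only [hookPoint]; omega

lemma hookPoint_fst_le {p q j r : ℕ} (hjp : j ≤ p) (hr : r + j ≤ p + q) :
    (hookPoint q j r).1 ≤ p := by
  simp only [hookPoint]; omega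

lemma hookPoint_snd_le (q j r : ℕ) : (hookPoint q j r).2 ≤ q := by
  simp only [hookPoint]; omega

lemma hookPoint_mono (q j : ℕ) : Monotone (hookPoint q j) := fun r r' h => by
  constructor <;> simp only [hookPoint] <;> omega

/- `chain x r` is the element of rank `r` on the chain through `x`. That chain runs over the
ranks `bot x ≤ r ≤ rankSum - bot x`, so all chains are symmetric about `rankSum / 2`. -/
structure SymmChains (α : Type*) where
  rank : α → ℕ
  rankSum : ℕ
  bot : α → ℕ
  chain : α → ℕ → α

namespace SymmChains

variable {α β : Type*}

structure IsDecomposition [Preorder α] (D : SymmChains α) (S : Set α) : Prop where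
  bot_le_rank : ∀ x ∈ S, D.bot x ≤ D.rank x
  rank_add_bot_le : ∀ x ∈ S, D.rank x + D.bot x ≤ D.rankSum
  chain_rank : ∀ x ∈ S, D.chain x (D.rank x) = x
  chain_mem : ∀ x ∈ S, ∀ r, D.bot x ≤ r → r + D.bot x ≤ D.rankSum → D.chain x r ∈ S
  rank_chain : ∀ x ∈ S, ∀ r, D.bot x ≤ r → r + D.bot x ≤ D.rankSum →
    D.rank (D.chain x r) = r
  chain_chain : ∀ x ∈ S, ∀ r, D.bot x ≤ r → r + D.bot x ≤ D.rankSum →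
    D.chain (D.chain x r) = D.chain x
  bot_chain : ∀ x ∈ S, ∀ r, D.bot x ≤ r → r + D.bot x ≤ D.rankSum →
    D.bot (D.chain x r) = D.bot x
  chain_mono : ∀ x ∈ S, ∀ r r', D.bot x ≤ r → r ≤ r' → r' + D.bot x ≤ D.rankSum →
    D.chain x r ≤ D.chain x r'

namespace IsDecomposition

variable [Preorder α] {D : SymmChains α} {S : Set α}

lemma le_or_le_of_chain_eq (hD : D.IsDecomposition S) {x y : α} (hx : x ∈ S) (hy : y ∈ S)
    {k : ℕ} (hkx : D.bot x ≤ k) (hkx' : k + D.bot x ≤ D.rankSum) (hky : D.bot y ≤ k)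
    (hky' : k + D.bot y ≤ D.rankSum) (h : D.chain x k = D.chain y k) : x ≤ y ∨ y ≤ x := by
  have hchain : D.chain y = D.chain x := by
    rw [← hD.chain_chain y hy k hky hky', ← h, hD.chain_chain x hx k hkx hkx']
  have hbot : D.bot y = D.bot x := by
    rw [← hD.bot_chain y hy k hky hky', ← h, hD.bot_chain x hx k hkx hkx']
  have hy_eq : D.chain x (D.rank y) = y := hchain ▸ hD.chain_rank y hy
  have := hD.bot_le_rank x hx; have := hD.rank_add_bot_le x hx
  have := hD.bot_le_rank y hy; have := hD.rank_add_bot_le y hy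
  rcases le_total (D.rank x) (D.rank y) with hxy | hxy
  · left
    rw [← hD.chain_rank x hx, ← hy_eq]
    exact hD.chain_mono x hx _ _ (by omega) hxy (by omega)
  · right
    rw [← hD.chain_rank x hx, ← hy_eq]
    exact hD.chain_mono x hx _ _ (by omega) hxy (by omega)

lemma card_le_of_isAntichain [DecidableEq α] {S A : Finset α} (hD : D.IsDecomposition S)
    (hAS : A ⊆ S) (hA : IsAntichain (· ≤ ·) (A : Set α)) :
    #A ≤ #{x ∈ S | D.rank x = D.rankSum / 2} := by
  have hmid : ∀ x ∈ S, D.bot x ≤ D.rankSum / 2 ∧ D.rankSum / 2 + D.bot x ≤ D.rankSum :=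
    fun x hx => by have := hD.bot_le_rank x hx; have := hD.rank_add_bot_le x hx; omega
  refine card_le_card_of_injOn (fun x => D.chain x (D.rankSum / 2)) (fun x hx => ?_) ?_
  · obtain ⟨h₁, h₂⟩ := hmid x (hAS hx)
    rw [mem_coe, mem_filter]
    exact ⟨hD.chain_mem x (hAS hx) _ h₁ h₂, hD.rank_chain x (hAS hx) _ h₁ h₂⟩
  · intro x hx y hy h
    obtain ⟨hx₁, hx₂⟩ := hmid x (hAS hx)
    obtain ⟨hy₁, hy₂⟩ := hmid y (hAS hy)
    rcases hD.le_or_le_of_chain_eq (hAS hx) (hAS hy) hx₁ hx₂ hy₁ hy₂ h with hxy | hyx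
    · exact hA.eq hx hy hxy
    · exact (hA.eq hy hx hyx).symm

end IsDecomposition

theorem IsDecomposition.isGreatest_card_antichain [PartialOrder α] [DecidableEq α]
    {D : SymmChains α} {S : Finset α} (hD : D.IsDecomposition S) (hρ : StrictMono D.rank) :
    IsGreatest {k | ∃ A ⊆ S, IsAntichain (· ≤ ·) (A : Set α) ∧ #A = k}
      #{x ∈ S | D.rank x = D.rankSum / 2} := by
  refine ⟨⟨_, filter_subset _ _, ?_, rfl⟩, ?_⟩
  · rw [coe_filter]
    exact IsAntichain.of_strictMonoOn_antitoneOn (hρ.strictMonoOn _)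
      fun _ ha _ hb _ => (hb.2.trans ha.2.symm).le
  · rintro k ⟨A, hAS, hA, rfl⟩
    exact hD.card_le_of_isAntichain hAS hA

def Icc (a b : ℕ) : SymmChains ℕ where
  rank := id
  rankSum := a + b
  bot _ := a
  chain _ r := r

lemma isDecomposition_Icc (a b : ℕ) : (Icc a b).IsDecomposition (Set.Icc a b) where
  bot_le_rank x hx := hx.1
  rank_add_bot_le x hx := show x + a ≤ a + b by have := hx.2; omega
  chain_rank _ _ := rfl
  chain_mem _ _ r h₁ h₂ := by simp only [Icc] at *; exact ⟨h₁, by omega⟩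
  rank_chain _ _ _ _ _ := rfl
  chain_chain _ _ _ _ _ := rfl
  bot_chain _ _ _ _ _ := rfl
  chain_mono _ _ _ _ _ h _ := h

section prod

variable (D : SymmChains α) (E : SymmChains β)

/- Positions `rank - bot` on the chains through `w.1` and `w.2` place `w` in a grid, which is cut
into the hooks of `gridHook`. -/
def prodHook (w : α × β) : ℕ :=
  gridHook (E.rankSum - 2 * E.bot w.2) (D.rank w.1 - D.bot w.1, E.rank w.2 - E.bot w.2)

def prodPos (w : α × β) (r : ℕ) : ℕ × ℕ :=
  hookPoint (E.rankSum - 2 * E.bot w.2) (prodHook D E w) (r - D.bot w.1 - E.bot w.2)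

def prod : SymmChains (α × β) where
  rank w := D.rank w.1 + E.rank w.2
  rankSum := D.rankSum + E.rankSum
  bot w := D.bot w.1 + E.bot w.2 + prodHook D E w
  chain w r :=
    (D.chain w.1 (D.bot w.1 + (prodPos D E w r).1), E.chain w.2 (E.bot w.2 + (prodPos D E w r).2))

variable {D E}

lemma prodHook_le [Preorder β] {T : Set β} (hE : E.IsDecomposition T) {w : α × β}
    (hw : w.2 ∈ T) :
    prodHook D E w ≤ D.rank w.1 - D.bot w.1 ∧
      prodHook D E w + (E.rank w.2 - E.bot w.2) ≤ E.rankSum - 2 * E.bot w.2 := by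
  have := hE.bot_le_rank _ hw; have := hE.rank_add_bot_le _ hw
  simp only [prodHook, gridHook]; omega

lemma prod_chain_congr {w w' : α × β} (h₁ : D.chain w'.1 = D.chain w.1)
    (h₂ : D.bot w'.1 = D.bot w.1) (h₃ : E.chain w'.2 = E.chain w.2)
    (h₄ : E.bot w'.2 = E.bot w.2)
    (h₅ : prodHook D E w' = prodHook D E w) : (D.prod E).chain w' = (D.prod E).chain w := by
  funext r
  simp only [SymmChains.prod, prodPos, h₁, h₂, h₃, h₄, h₅]

variable [Preorder α] [Preorder β] {S : Set α} {T : Set β}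

lemma prod_chain_bounds (hD : D.IsDecomposition S) (hE : E.IsDecomposition T) {w : α × β}
    (hw : w ∈ S ×ˢ T) {r : ℕ} (hr₁ : (D.prod E).bot w ≤ r)
    (hr₂ : r + (D.prod E).bot w ≤ (D.prod E).rankSum) :
    D.bot w.1 + (prodPos D E w r).1 + D.bot w.1 ≤ D.rankSum ∧
      E.bot w.2 + (prodPos D E w r).2 + E.bot w.2 ≤ E.rankSum ∧
      (prodPos D E w r).1 + (prodPos D E w r).2 = r - D.bot w.1 - E.bot w.2 ∧
      gridHook (E.rankSum - 2 * E.bot w.2) (prodPos D E w r) = prodHook D E w := by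
  simp only [prod] at hr₁ hr₂
  have := hD.bot_le_rank _ hw.1; have := hD.rank_add_bot_le _ hw.1
  have := hE.bot_le_rank _ hw.2; have := hE.rank_add_bot_le _ hw.2
  have hg := prodHook_le (D := D) hE hw.2
  refine ⟨?_, ?_, hookPoint_fst_add_snd (by omega) (by omega),
    gridHook_hookPoint (by omega) (by omega)⟩
  · have : (prodPos D E w r).1 ≤ D.rankSum - 2 * D.bot w.1 :=
      hookPoint_fst_le (by omega) (by omega)
    omega
  · have : (prodPos D E w r).2 ≤ E.rankSum - 2 * E.bot w.2 := hookPoint_snd_le _ _ _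
    omega

lemma prodPos_rank (hD : D.IsDecomposition S) (hE : E.IsDecomposition T) {w : α × β}
    (hw : w ∈ S ×ˢ T) :
    prodPos D E w ((D.prod E).rank w) = (D.rank w.1 - D.bot w.1, E.rank w.2 - E.bot w.2) := by
  have := hD.bot_le_rank _ hw.1; have := hE.bot_le_rank _ hw.2
  have := hE.rank_add_bot_le _ hw.2
  have hsplit : D.rank w.1 + E.rank w.2 - D.bot w.1 - E.bot w.2 =
      (D.rank w.1 - D.bot w.1) + (E.rank w.2 - E.bot w.2) := by omega
  rw [prodPos, prod, hsplit]
  exact hookPoint_gridHook (by omega)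

lemma prodHook_chain (hD : D.IsDecomposition S) (hE : E.IsDecomposition T) {w : α × β}
    (hw : w ∈ S ×ˢ T) {r : ℕ} (hr₁ : (D.prod E).bot w ≤ r)
    (hr₂ : r + (D.prod E).bot w ≤ (D.prod E).rankSum) :
    prodHook D E ((D.prod E).chain w r) = prodHook D E w := by
  obtain ⟨h₁, h₂, -, hhook⟩ := prod_chain_bounds hD hE hw hr₁ hr₂
  simp only [prodHook, SymmChains.prod]
  rw [hD.rank_chain _ hw.1 _ (Nat.le_add_right _ _) h₁,
    hD.bot_chain _ hw.1 _ (Nat.le_add_right _ _) h₁,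
    hE.rank_chain _ hw.2 _ (Nat.le_add_right _ _) h₂,
    hE.bot_chain _ hw.2 _ (Nat.le_add_right _ _) h₂,
    Nat.add_sub_cancel_left, Nat.add_sub_cancel_left]
  exact hhook

theorem IsDecomposition.prod (hD : D.IsDecomposition S) (hE : E.IsDecomposition T) :
    (D.prod E).IsDecomposition (S ×ˢ T) where
  bot_le_rank w hw := by
    have := hD.bot_le_rank _ hw.1; have := hE.bot_le_rank _ hw.2
    have := prodHook_le (D := D) hE hw.2
    simp only [SymmChains.prod]; omega
  rank_add_bot_le w hw := by
    have := hD.bot_le_rank _ hw.1; have := hD.rank_add_bot_le _ hw.1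
    have := hE.bot_le_rank _ hw.2; have := hE.rank_add_bot_le _ hw.2
    have := prodHook_le (D := D) hE hw.2
    simp only [SymmChains.prod]; omega
  chain_rank w hw := by
    have := hD.bot_le_rank _ hw.1; have := hE.bot_le_rank _ hw.2
    change (D.chain w.1 (D.bot w.1 + (prodPos D E w ((D.prod E).rank w)).1),
      E.chain w.2 (E.bot w.2 + (prodPos D E w ((D.prod E).rank w)).2)) = w
    rw [prodPos_rank hD hE hw, Nat.add_sub_cancel' (by omega), Nat.add_sub_cancel' (by omega),
      hD.chain_rank _ hw.1, hE.chain_rank _ hw.2]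
  chain_mem w hw r hr₁ hr₂ := by
    obtain ⟨h₁, h₂, -, -⟩ := prod_chain_bounds hD hE hw hr₁ hr₂
    exact ⟨hD.chain_mem _ hw.1 _ (Nat.le_add_right _ _) h₁,
      hE.chain_mem _ hw.2 _ (Nat.le_add_right _ _) h₂⟩
  rank_chain w hw r hr₁ hr₂ := by
    obtain ⟨h₁, h₂, hsum, -⟩ := prod_chain_bounds hD hE hw hr₁ hr₂
    simp only [SymmChains.prod] at hr₁ ⊢
    rw [hD.rank_chain _ hw.1 _ (Nat.le_add_right _ _) h₁,
      hE.rank_chain _ hw.2 _ (Nat.le_add_right _ _) h₂]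
    omega
  chain_chain w hw r hr₁ hr₂ := by
    obtain ⟨h₁, h₂, -, -⟩ := prod_chain_bounds hD hE hw hr₁ hr₂
    exact prod_chain_congr (hD.chain_chain _ hw.1 _ (Nat.le_add_right _ _) h₁)
      (hD.bot_chain _ hw.1 _ (Nat.le_add_right _ _) h₁)
      (hE.chain_chain _ hw.2 _ (Nat.le_add_right _ _) h₂)
      (hE.bot_chain _ hw.2 _ (Nat.le_add_right _ _) h₂) (prodHook_chain hD hE hw hr₁ hr₂)
  bot_chain w hw r hr₁ hr₂ := by
    obtain ⟨h₁, h₂, -, -⟩ := prod_chain_bounds hD hE hw hr₁ hr₂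
    have hhook := prodHook_chain hD hE hw hr₁ hr₂
    simp only [SymmChains.prod] at hhook ⊢
    rw [hhook, hD.bot_chain _ hw.1 _ (Nat.le_add_right _ _) h₁,
      hE.bot_chain _ hw.2 _ (Nat.le_add_right _ _) h₂]
  chain_mono w hw r r' hr₁ hr hr₂ := by
    have hr₂' : r + (D.prod E).bot w ≤ (D.prod E).rankSum := by omega
    obtain ⟨h₁', h₂', -, -⟩ := prod_chain_bounds hD hE hw (hr₁.trans hr) hr₂
    have hpos : prodPos D E w r ≤ prodPos D E w r' :=
      hookPoint_mono _ _ (by omega)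
    exact ⟨hD.chain_mono _ hw.1 _ _ (Nat.le_add_right _ _) (by have := hpos.1; omega) h₁',
      hE.chain_mono _ hw.2 _ _ (Nat.le_add_right _ _) (by have := hpos.2; omega) h₂'⟩

end prod

lemma strictMono_prod_rank [PartialOrder α] [PartialOrder β] {D : SymmChains α}
    {E : SymmChains β} (hD : StrictMono D.rank)
    (hE : StrictMono E.rank) : StrictMono (D.prod E).rank := by
  rintro ⟨u, v⟩ ⟨u', v'⟩ h
  rcases Prod.lt_iff.1 h with ⟨hu, hv⟩ | ⟨hu, hv⟩
  · exact Nat.add_lt_add_of_lt_of_le (hD hu) (hE.monotone hv)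
  · exact Nat.add_lt_add_of_le_of_lt (hD.monotone hu) (hE hv)

def comap [Preorder α] [Preorder β] (D : SymmChains β) (e : α ≃o β) : SymmChains α where
  rank := D.rank ∘ e
  rankSum := D.rankSum
  bot := D.bot ∘ e
  chain x r := e.symm (D.chain (e x) r)

theorem IsDecomposition.comap [Preorder α] [Preorder β] {D : SymmChains β} {T : Set β}
    (hD : D.IsDecomposition T) (e : α ≃o β) : (D.comap e).IsDecomposition (e ⁻¹' T) where
  bot_le_rank x hx := hD.bot_le_rank _ hx
  rank_add_bot_le x hx := hD.rank_add_bot_le _ hx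
  chain_rank x hx := e.symm_apply_eq.2 (hD.chain_rank _ hx)
  chain_mem x hx r h₁ h₂ := by
    simpa [SymmChains.comap] using hD.chain_mem _ hx r h₁ h₂
  rank_chain x hx r h₁ h₂ := by
    simpa [SymmChains.comap] using hD.rank_chain _ hx r h₁ h₂
  chain_chain x hx r h₁ h₂ := by
    funext
    simp [SymmChains.comap, hD.chain_chain _ hx r h₁ h₂]
  bot_chain x hx r h₁ h₂ := by
    simpa [SymmChains.comap] using hD.bot_chain _ hx r h₁ h₂
  chain_mono x hx r r' h₁ h h₂ := e.symm.monotone (hD.chain_mono _ hx r r' h₁ h h₂)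

end SymmChains

lemma three_mul_sum_range_sq_add (m : ℕ) :
    3 * (∑ i ∈ range (m + 1), i ^ 2 + ∑ i ∈ range m, i ^ 2) = 2 * m ^ 3 + m := by
  induction m with
  | zero => simp
  | succ n ih =>
    have hstep := sum_range_succ (fun i => i ^ 2) n
    rw [sum_range_succ _ (n + 1)]
    linarith

lemma three_mul_sum_range_min_sq (m : ℕ) :
    3 * ∑ s ∈ range (2 * m + 3), min (s - 1) (2 * m + 1 - s) ^ 2 = 2 * m ^ 3 + m := by
  have hlow : ∑ s ∈ range (m + 2), min (s - 1) (2 * m + 1 - s) ^ 2 =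
      ∑ i ∈ range (m + 1), i ^ 2 := by
    rw [sum_range_succ', ← add_zero (∑ i ∈ range (m + 1), i ^ 2)]
    congr 1
    refine sum_congr rfl fun i hi => ?_
    rw [mem_range] at hi
    congr 1
    omega
  have hhigh : ∑ i ∈ range (m + 1), min (m + 2 + i - 1) (2 * m + 1 - (m + 2 + i)) ^ 2 =
      ∑ i ∈ range m, i ^ 2 := by
    rw [← sum_range_reflect, sum_range_succ', ← add_zero (∑ i ∈ range m, i ^ 2)]
    congr 1
    · refine sum_congr rfl fun i hi => ?_
      rw [mem_range] at hi
      congr 1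
      omega
    · exact (pow_eq_zero_iff two_ne_zero).2 (by omega)
  rw [show 2 * m + 3 = (m + 2) + (m + 1) by ring, sum_range_add, hlow, hhigh,
    three_mul_sum_range_sq_add]

def finFourArrowIso (α : Type*) [Preorder α] : (Fin 4 → α) ≃o (α × α) × (α × α) where
  toFun x := ((x 0, x 1), (x 2, x 3))
  invFun w := ![w.1.1, w.1.2, w.2.1, w.2.2]
  left_inv x := by ext i; fin_cases i <;> rfl
  right_inv _ := rfl
  map_rel_iff' {x y} := by
    change ((x 0, x 1), (x 2, x 3)) ≤ ((y 0, y 1), (y 2, y 3)) ↔ x ≤ y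
    simp [Pi.le_def, Fin.forall_fin_succ, and_assoc]

lemma coe_Icc_eq_preimage_finFourArrowIso {α : Type*} [PartialOrder α] [LocallyFiniteOrder α]
    [DecidableEq α]
    (a b : Fin 4 → α) :
    (Finset.Icc a b : Set (Fin 4 → α)) = finFourArrowIso α ⁻¹'
      ((Set.Icc (a 0) (b 0) ×ˢ Set.Icc (a 1) (b 1)) ×ˢ
        (Set.Icc (a 2) (b 2) ×ˢ Set.Icc (a 3) (b 3))) := by
  simp only [coe_Icc, Set.Icc_prod_Icc, OrderIso.preimage_Icc]
  congr 1 <;> exact ((finFourArrowIso α).symm_apply_apply _).symm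

lemma card_filter_add_eq {α β : Type*} [DecidableEq α] [DecidableEq β] (S : Finset α)
    (T : Finset β) (f : α → ℕ) (g : β → ℕ) (n : ℕ) :
    #{w ∈ S ×ˢ T | f w.1 + g w.2 = n} =
      ∑ p ∈ antidiagonal n, #{u ∈ S | f u = p.1} * #{v ∈ T | g v = p.2} := by
  rw [card_eq_sum_card_fiberwise (f := fun w => (f w.1, g w.2)) (t := antidiagonal n)]
  · refine sum_congr rfl fun ⟨i, j⟩ hp => ?_
    rw [← card_product]
    congr 1
    ext ⟨u, v⟩
    simp only [mem_filter, mem_product, Prod.mk.injEq, HasAntidiagonal.mem_antidiagonal] at hp ⊢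
    constructor
    · rintro ⟨⟨⟨hu, hv⟩, -⟩, rfl, rfl⟩; exact ⟨⟨hu, rfl⟩, hv, rfl⟩
    · rintro ⟨⟨hu, rfl⟩, hv, rfl⟩; exact ⟨⟨⟨hu, hv⟩, hp⟩, rfl, rfl⟩
  · intro w hw
    simpa using (mem_filter.1 hw).2

lemma card_filter_Icc_prod_Icc_add_eq (m s : ℕ) :
    #{u ∈ Icc 1 m ×ˢ Icc 1 m | u.1 + u.2 = s} = min (s - 1) (2 * m + 1 - s) := by
  have : #{u ∈ Icc 1 m ×ˢ Icc 1 m | u.1 + u.2 = s} =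
      #(Icc (max 1 (s - m)) (min m (s - 1))) := by
    refine card_nbij' Prod.fst (fun a => (a, s - a)) ?_ ?_ ?_ (fun _ _ => rfl)
    · intro u hu
      simp only [mem_coe, mem_filter, mem_product, mem_Icc] at hu ⊢
      omega
    · intro a ha
      simp only [mem_coe, mem_filter, mem_product, mem_Icc] at ha ⊢
      omega
    · intro u hu
      simp only [mem_coe, mem_filter, mem_product, mem_Icc] at hu
      ext
      · rfl
      · dsimp only; omega
  rw [this, Nat.card_Icc]
  omega

lemma card_middle_layer (m : ℕ) :
    #{x ∈ Finset.Icc (1 : Fin 4 → ℕ) (fun _ => m) | x 0 + x 1 + (x 2 + x 3) = 2 * m + 2} =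
      (2 * m ^ 3 + m) / 3 := by
  have hbox (x : Fin 4 → ℕ) : x ∈ Finset.Icc 1 (fun _ => m) ↔
      finFourArrowIso ℕ x ∈ (Icc 1 m ×ˢ Icc 1 m) ×ˢ (Icc 1 m ×ˢ Icc 1 m) := by
    rw [← mem_coe, coe_Icc_eq_preimage_finFourArrowIso, ← mem_coe]
    simp only [coe_product, coe_Icc]
    rfl
  calc _ = #{w ∈ (Icc 1 m ×ˢ Icc 1 m) ×ˢ (Icc 1 m ×ˢ Icc 1 m) |
          (w.1.1 + w.1.2) + (w.2.1 + w.2.2) = 2 * m + 2} :=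
        card_equiv (finFourArrowIso ℕ).toEquiv fun x => by simp only [mem_filter, hbox]; rfl
    _ = ∑ s ∈ range (2 * m + 3), min (s - 1) (2 * m + 1 - s) ^ 2 := by
        rw [card_filter_add_eq _ _ (fun u : ℕ × ℕ => u.1 + u.2)
            (fun u : ℕ × ℕ => u.1 + u.2),
          Nat.sum_antidiagonal_eq_sum_range_succ_mk]
        refine sum_congr rfl fun s hs => ?_
        rw [mem_range] at hs
        simp only [card_filter_Icc_prod_Icc_add_eq, sq]
        congr 1
        omega
    _ = (2 * m ^ 3 + m) / 3 := by
        rw [← three_mul_sum_range_min_sq m, Nat.mul_div_cancel_left _ three_pos]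

theorem max_antichain_four_general (m : ℕ) :
    IsGreatest
      {k : ℕ | ∃ A : Finset (Fin 4 → ℕ),
        A ⊆ Finset.Icc 1 (fun _ => m) ∧
        IsAntichain (· ≤ ·) (A : Set (Fin 4 → ℕ)) ∧ A.card = k}
      ((2 * m ^ 3 + m) / 3) := by
  let square := (SymmChains.Icc 1 m).prod (SymmChains.Icc 1 m)
  let D := (square.prod square).comap (finFourArrowIso ℕ)
  have hsquare := (SymmChains.isDecomposition_Icc 1 m).prod (SymmChains.isDecomposition_Icc 1 m)
  have hD : D.IsDecomposition (Finset.Icc (1 : Fin 4 → ℕ) (fun _ => m)) := by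
    rw [coe_Icc_eq_preimage_finFourArrowIso]
    exact (hsquare.prod hsquare).comap _
  have hsquare_rank : StrictMono square.rank :=
    SymmChains.strictMono_prod_rank strictMono_id strictMono_id
  have hD_rank : StrictMono D.rank :=
    (SymmChains.strictMono_prod_rank hsquare_rank hsquare_rank).comp
      (finFourArrowIso ℕ).strictMono
  have hmid : D.rankSum / 2 = 2 * m + 2 := by
    change (1 + m + (1 + m) + (1 + m + (1 + m))) / 2 = 2 * m + 2
    omega
  rw [← card_middle_layer m, ← hmid]
  exact hD.isGreatest_card_antichain hD_rank

/-- The maximum size of an antichain in `[m]^4` with the componentwise order is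
`(2m³ + m)/3`. -/
theorem max_antichain_four (m : ℕ) (hm : 0 < m) :
    IsGreatest
      {k : ℕ | ∃ A : Finset (Fin 4 → ℕ),
        A ⊆ Finset.Icc 1 (fun _ => m) ∧
        IsAntichain (· ≤ ·) (A : Set (Fin 4 → ℕ)) ∧ A.card = k}
      ((2 * m ^ 3 + m) / 3) :=
  max_antichain_four_general m
end

section
/- The sequence (N_k) where N_k is the number of x ∈ ∏_{i=1}^n [m_i] with ∑ x_i = k is symmetric: N_k = N_{n + ∑_i m_i - k} for all k; and it is unimodal, attaining its maximum at k = floor((n + ∑_i m_i)/2). -/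
/-!
Adding a coordinate with range `[a]` replaces the layer counts `N` by the window sums
`k ↦ N (k - 1) + ⋯ + N (k - a)`. A window sum of a sequence that is symmetric about `t / 2`
is symmetric about `(t + a + 1) / 2`, and consecutive window sums differ by
`N k - N (k - a)`, which is nonnegative up to the new centre because `k - a` is then at least
as far from `t / 2` as `k` is. Induction on the number of coordinates, starting from the single
point of the empty box, gives both properties.
-/

open Finset

/-- `t` is twice the centre of symmetry; given the symmetry, the second clause says that `f`
increases up to `t / 2`. -/
def IsSymmUnimodal {M : Type*} [Preorder M] (f : ℤ → M) (t : ℤ) : Prop :=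
  (∀ k, f (t - k) = f k) ∧ ∀ k l, k ≤ l → k + l ≤ t → f k ≤ f l

def windowSum {M : Type*} [AddCommMonoid M] (f : ℤ → M) (a : ℕ) (k : ℤ) : M :=
  ∑ j ∈ Icc 1 a, f (k - j)

theorem windowSum_add_one_add {M : Type*} [AddCommMonoid M] (f : ℤ → M) (a : ℕ) (k : ℤ) :
    windowSum f a (k + 1) + f (k - a) = windowSum f a k + f k := by
  induction a with
  | zero => simp [windowSum]
  | succ a ih =>
    simp only [windowSum, sum_Icc_succ_top (Nat.le_add_left 1 a)] at *
    have h1 : k + 1 - ((a + 1 : ℕ) : ℤ) = k - a := by push_cast; ring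
    have h2 : k - ((a + 1 : ℕ) : ℤ) = k - a - 1 := by push_cast; ring
    rw [h1, h2, ih, add_right_comm]

namespace IsSymmUnimodal

variable {M : Type*}

theorem of_le_succ [Preorder M] {f : ℤ → M} {t : ℤ} (hsymm : ∀ k, f (t - k) = f k)
    (hstep : ∀ k, 2 * k + 2 ≤ t → f k ≤ f (k + 1)) : IsSymmUnimodal f t := by
  have hmono : ∀ k l, k ≤ l → 2 * l ≤ t → f k ≤ f l := by
    intro k l hkl
    induction l, hkl using Int.leInduction with
    | base => exact fun _ => le_rfl
    | succ l _ ih => exact fun hl => (ih (by omega)).trans (hstep l (by omega))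
  refine ⟨hsymm, fun k l hkl hkt => ?_⟩
  rcases le_or_gt (2 * l) t with hl | hl
  · exact hmono k l hkl hl
  · rw [← hsymm l]
    exact hmono k (t - l) (by omega) (by omega)

theorem windowSum [AddCommMonoid M] [PartialOrder M] [IsOrderedCancelAddMonoid M]
    {f : ℤ → M} {t : ℤ} (hf : IsSymmUnimodal f t) (a : ℕ) :
    IsSymmUnimodal (_root_.windowSum f a) (t + a + 1) := by
  obtain ⟨hsymm, hle⟩ := hf
  refine of_le_succ (fun k => ?_) (fun k hk => ?_)
  · have hmem : ∀ j ∈ Icc 1 a, a + 1 - j ∈ Icc 1 a := fun j hj => by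
      rw [mem_Icc] at hj ⊢; omega
    have hinv : ∀ j ∈ Icc 1 a, a + 1 - (a + 1 - j) = j := fun j hj => by
      rw [mem_Icc] at hj; omega
    refine sum_nbij' (fun j => a + 1 - j) (fun j => a + 1 - j) hmem hmem hinv hinv fun j hj => ?_
    rw [mem_Icc] at hj
    rw [← hsymm]
    congr 1
    push_cast [Nat.cast_sub (by omega : j ≤ a + 1)]
    ring
  · have hlag : f (k - a) ≤ f k := hle _ _ (by omega) (by omega)
    refine le_of_add_le_add_right (a := f k) ?_
    calc _ = _root_.windowSum f a (k + 1) + f (k - a) := (windowSum_add_one_add f a k).symm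
      _ ≤ _ := by gcongr

end IsSymmUnimodal

def layerCount {n : ℕ} (m : Fin n → ℕ) (k : ℤ) : ℕ :=
  #{x ∈ Icc 1 m | ∑ i, (x i : ℤ) = k}

theorem layerCount_zero (m : Fin 0 → ℕ) (k : ℤ) : layerCount m k = if k = 0 then 1 else 0 := by
  rw [Subsingleton.elim m 1]
  simp only [layerCount, Icc_self, univ_eq_empty, sum_empty, filter_singleton, eq_comm]
  split_ifs <;> rfl

theorem layerCount_succ {n : ℕ} (m : Fin (n + 1) → ℕ) (k : ℤ) :
    layerCount m k = windowSum (layerCount (Fin.tail m)) (m 0) k := by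
  have hcons (j : ℕ) (y : Fin n → ℕ) :
      (Fin.cons j y : Fin (n + 1) → ℕ) ∈ {x ∈ Icc 1 m | ∑ i, (x i : ℤ) = k} ↔
        j ∈ Icc 1 (m 0) ∧ y ∈ {y ∈ Icc 1 (Fin.tail m) | ∑ i, (y i : ℤ) = k - j} := by
    simp only [mem_filter, mem_Icc, Fin.le_cons, Fin.cons_le, Fin.sum_univ_succ, Fin.cons_zero,
      Fin.cons_succ, Pi.one_apply, eq_sub_iff_add_eq']
    tauto
  rw [layerCount, card_eq_sum_card_fiberwise (f := fun x => x 0) (t := Icc 1 (m 0))]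
  · refine sum_congr rfl fun j hj => ?_
    refine card_nbij' Fin.tail (fun y => Fin.cons j y) (fun x hx => ?_) (fun y hy => ?_)
      (fun x hx => ?_) (fun y _ => Fin.tail_cons (α := fun _ => ℕ) j y)
    · obtain ⟨hxk, rfl⟩ := mem_filter.1 (mem_coe.1 hx)
      rw [← Fin.cons_self_tail x] at hxk
      exact ((hcons _ _).1 hxk).2
    · exact mem_filter.2 ⟨(hcons j y).2 ⟨hj, hy⟩, rfl⟩
    · obtain ⟨-, rfl⟩ := mem_filter.1 hx
      exact Fin.cons_self_tail x
  · intro x hx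
    obtain ⟨hlo, hhi⟩ := mem_Icc.1 (mem_filter.1 hx).1
    exact mem_Icc.2 ⟨hlo 0, hhi 0⟩

theorem isSymmUnimodal_layerCount {n : ℕ} (m : Fin n → ℕ) :
    IsSymmUnimodal (layerCount m) (n + ∑ i, (m i : ℤ)) := by
  induction n with
  | zero =>
    simp only [CharP.cast_eq_zero, univ_eq_empty, sum_empty, zero_add]
    refine .of_le_succ (fun k => ?_) (fun k hk => ?_) <;> simp only [layerCount_zero]
    · simp
    · simp [show k ≠ 0 by omega]
  | succ n ih =>
    have hcentre :
        (n + ∑ i, (Fin.tail m i : ℤ)) + m 0 + 1 = ((n + 1 : ℕ) : ℤ) + ∑ i, (m i : ℤ) := by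
      rw [Fin.sum_univ_succ]
      simp only [Fin.tail]
      push_cast
      ring
    rw [funext (layerCount_succ m), ← hcentre]
    exact (ih (Fin.tail m)).windowSum (m 0)

theorem layer_counts_symmetric_unimodal_general (n : ℕ) (m : Fin n → ℕ) :
    (∀ k : ℤ,
      ((Finset.Icc (1 : Fin n → ℕ) m).filter (fun x => (∑ i, (x i : ℤ)) = k)).card =
      ((Finset.Icc (1 : Fin n → ℕ) m).filter
        (fun x => (∑ i, (x i : ℤ)) = (n : ℤ) + (∑ i, (m i : ℤ)) - k)).card) ∧
    (∀ k l : ℤ, k ≤ l → l ≤ (((n + ∑ i, m i) / 2 : ℕ) : ℤ) →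
      ((Finset.Icc (1 : Fin n → ℕ) m).filter (fun x => (∑ i, (x i : ℤ)) = k)).card ≤
      ((Finset.Icc (1 : Fin n → ℕ) m).filter (fun x => (∑ i, (x i : ℤ)) = l)).card) ∧
    (∀ k l : ℤ, (((n + ∑ i, m i) / 2 : ℕ) : ℤ) ≤ k → k ≤ l →
      ((Finset.Icc (1 : Fin n → ℕ) m).filter (fun x => (∑ i, (x i : ℤ)) = l)).card ≤
      ((Finset.Icc (1 : Fin n → ℕ) m).filter (fun x => (∑ i, (x i : ℤ)) = k)).card) := by
  obtain ⟨hsymm, hle⟩ := isSymmUnimodal_layerCount m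
  have hcentre : (n : ℤ) + ∑ i, (m i : ℤ) = ((n + ∑ i, m i : ℕ) : ℤ) := by push_cast; rfl
  refine ⟨fun k => (hsymm k).symm, fun k l hkl hl => hle k l hkl (by omega),
    fun k l hk hkl => ?_⟩
  rcases hkl.eq_or_lt with rfl | hlt
  · exact le_rfl
  · show layerCount m l ≤ layerCount m k
    rw [← hsymm l]
    exact hle _ _ (by omega) (by omega)

/-- The sequence `N k` counting points of the box `∏_i [m i]` with coordinate sum
`k` is symmetric (`N k = N (n + ∑ m i - k)`) and unimodal with maximum attained
at `k = ⌊(n + ∑ m i)/2⌋`. -/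
theorem layer_counts_symmetric_unimodal (n : ℕ) (hn : 0 < n) (m : Fin n → ℕ)
    (hm : ∀ i, 0 < m i) :
    (∀ k : ℤ,
      ((Finset.Icc (1 : Fin n → ℕ) m).filter (fun x => (∑ i, (x i : ℤ)) = k)).card =
      ((Finset.Icc (1 : Fin n → ℕ) m).filter
        (fun x => (∑ i, (x i : ℤ)) = (n : ℤ) + (∑ i, (m i : ℤ)) - k)).card) ∧
    (∀ k l : ℤ, k ≤ l → l ≤ (((n + ∑ i, m i) / 2 : ℕ) : ℤ) →
      ((Finset.Icc (1 : Fin n → ℕ) m).filter (fun x => (∑ i, (x i : ℤ)) = k)).card ≤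
      ((Finset.Icc (1 : Fin n → ℕ) m).filter (fun x => (∑ i, (x i : ℤ)) = l)).card) ∧
    (∀ k l : ℤ, (((n + ∑ i, m i) / 2 : ℕ) : ℤ) ≤ k → k ≤ l →
      ((Finset.Icc (1 : Fin n → ℕ) m).filter (fun x => (∑ i, (x i : ℤ)) = l)).card ≤
      ((Finset.Icc (1 : Fin n → ℕ) m).filter (fun x => (∑ i, (x i : ℤ)) = k)).card) :=
  layer_counts_symmetric_unimodal_general n m
end

section
/- For n = 5, the maximum size of an antichain in [m]^5 satisfies S(m,5)/m^4 → 115/192 as m → ∞. -/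
/-!
By de Bruijn, Tengbergen and Kruyswijk, the box `[0, s]^n` is a disjoint union of symmetric chains
(saturated chains running from rank `r` to rank `n s - r`): the product of such a chain with
`[0, s]` splits again into symmetric chains, so they can be built one coordinate at a time. Every
symmetric chain meets the middle rank `⌊n s / 2⌋`, so the middle layer is a largest antichain.

By inclusion-exclusion over the set of coordinates exceeding `s`, the middle layer of `[0, s]^5`
has `∑_{j ≤ 2} (-1)^j C(5, j) C(⌊5 s / 2⌋ - j (s + 1) + 4, 4)` points. With `m = s + 1` each
binomial is `(5/2 - j)^4 m^4 / 4! + O(m^3)`, and `(5/2)^4 - 5 (3/2)^4 + 10 (1/2)^4 = 4! · 115/192`.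
-/

open Filter

/-- The maximum size of an antichain in `[m]^n` with the componentwise order. -/
noncomputable def maxAntichainSize (m n : ℕ) : ℕ :=
  sSup {k : ℕ | ∃ A : Finset (Fin n → ℕ),
    A ⊆ Finset.Icc 1 (fun _ => m) ∧
    IsAntichain (· ≤ ·) (A : Set (Fin n → ℕ)) ∧ A.card = k}

open Finset Topology
open scoped Nat

namespace Finset

variable {ι : Type*} [Fintype ι] [DecidableEq ι]

theorem card_piAntidiag_univ (q : ℕ) :
    #(piAntidiag (univ : Finset ι) q) = (Fintype.card ι + q - 1).choose q := by
  rw [← card_univ, ← card_finsuppAntidiag_nat_eq_choose]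
  refine card_nbij' Finsupp.equivFunOnFinite.symm (⇑) (fun f hf => ?_) (fun f hf => ?_)
    (fun f _ => ?_) (fun f _ => ?_) <;> simp_all [mem_piAntidiag, mem_finsuppAntidiag]

theorem card_filter_le_piAntidiag_univ (e : ι → ℕ) (r : ℕ) :
    #{x ∈ piAntidiag (univ : Finset ι) (r + ∑ i, e i) | ∀ i : ι, e i ≤ x i} =
      #(piAntidiag (univ : Finset ι) r) := by
  refine card_nbij' (· - e) (· + e) (fun x hx => ?_) (fun y hy => ?_)
    (fun x hx => tsub_add_cancel_of_le (mem_filter.1 hx).2) (fun y _ => add_tsub_cancel_right y e)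
  · obtain ⟨hsum, hle⟩ : ∑ i, x i = r + ∑ i, e i ∧ ∀ i, e i ≤ x i := by
      simpa [mem_piAntidiag] using hx
    simp [mem_piAntidiag, sum_tsub_distrib univ fun i _ => hle i, hsum]
  · simp_all [mem_piAntidiag, sum_add_distrib]

end Finset

theorem tendsto_cast_choose_div_pow {f : ℕ → ℕ} {c : ℝ} (k : ℕ)
    (hf : Tendsto (fun m => (f m : ℝ) / m) atTop (𝓝 c)) :
    Tendsto (fun m => ((f m).choose k : ℝ) / m ^ k) atTop (𝓝 (c ^ k / k !)) := by
  have hfactor : ∀ j ∈ range k, Tendsto (fun m : ℕ => ((f m : ℝ) - j) / m) atTop (𝓝 c) :=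
    fun j _ => by
      simpa [sub_div, div_eq_mul_one_div (j : ℝ)] using
        hf.sub ((tendsto_one_div_atTop_nhds_zero_nat (𝕜 := ℝ)).const_mul (j : ℝ))
  have hprod := (tendsto_finsetProd _ hfactor).div_const (k ! : ℝ)
  rw [prod_const, card_range] at hprod
  refine hprod.congr fun m => ?_
  rw [prod_div_distrib, prod_const, card_range, div_div, mul_comm, ← div_div,
    ← descPochhammer_eval_eq_prod_range, ← Nat.cast_choose_eq_descPochhammer_div]

lemma tendsto_mul_pred_div_two_div (a : ℕ) :
    Tendsto (fun m : ℕ => ((a * (m - 1) / 2 : ℕ) : ℝ) / m) atTop (𝓝 (a / 2)) := by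
  have hlow : Tendsto (fun m : ℕ => (a : ℝ) / 2 - (a + 1) / 2 * (1 / m)) atTop (𝓝 (a / 2)) := by
    simpa using ((tendsto_one_div_atTop_nhds_zero_nat (𝕜 := ℝ)).const_mul
      ((a + 1) / 2 : ℝ)).const_sub ((a : ℝ) / 2)
  have hbounds (m : ℕ) : (a : ℝ) / 2 - (a + 1) / 2 * (1 / (m + 1)) ≤ ((a * m / 2 : ℕ) : ℝ) / (m + 1)
      ∧ ((a * m / 2 : ℕ) : ℝ) / (m + 1) ≤ a / 2 := by
    have h₁ : (a * m : ℝ) ≤ 2 * (a * m / 2 : ℕ) + 1 := by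
      exact_mod_cast (by omega : a * m ≤ 2 * (a * m / 2) + 1)
    have h₂ : 2 * ((a * m / 2 : ℕ) : ℝ) ≤ a * m := by exact_mod_cast Nat.mul_div_le (a * m) 2
    constructor <;> field_simp <;> nlinarith
  refine tendsto_of_tendsto_of_tendsto_of_le_of_le' hlow tendsto_const_nhds ?_ ?_ <;>
    filter_upwards [eventually_gt_atTop 0] with m hm <;>
    obtain ⟨m, rfl⟩ := Nat.exists_eq_add_of_lt hm
  · simpa using (hbounds m).1
  · simpa using (hbounds m).2

lemma tendsto_five_mul_pred_div_two_sub_mul_div {j : ℕ} (hj : j < 3) :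
    Tendsto (fun m : ℕ => ((5 * (m - 1) / 2 - j * m + 4 : ℕ) : ℝ) / m) atTop (𝓝 (5 / 2 - j)) := by
  have h := ((tendsto_mul_pred_div_two_div 5).sub_const (j : ℝ)).add
    ((tendsto_one_div_atTop_nhds_zero_nat (𝕜 := ℝ)).const_mul 4)
  rw [mul_zero, add_zero] at h
  refine h.congr' ?_
  filter_upwards [eventually_ge_atTop 6] with m hm
  rw [Nat.cast_add, Nat.cast_sub (by interval_cases j <;> omega)]
  push_cast
  field_simp

namespace Grid

variable {s n : ℕ}

def box (s n : ℕ) : Finset (Fin n → ℕ) := Icc 0 fun _ => s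

def rank (x : Fin n → ℕ) : ℕ := ∑ i, x i

def layer (s n k : ℕ) : Finset (Fin n → ℕ) := {x ∈ box s n | rank x = k}

def middleLayer (s n : ℕ) : Finset (Fin n → ℕ) := layer s n (n * s / 2)

lemma mem_box {x : Fin n → ℕ} : x ∈ box s n ↔ ∀ i, x i ≤ s := by
  simp [box, Pi.le_def]

lemma cons_mem_box {a : ℕ} {x : Fin n → ℕ} :
    Fin.cons a x ∈ box s (n + 1) ↔ a ≤ s ∧ x ∈ box s n := by
  simp [mem_box, Fin.forall_fin_succ]

lemma tail_mem_box {x : Fin (n + 1) → ℕ} (hx : x ∈ box s (n + 1)) : Fin.tail x ∈ box s n := by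
  rw [← Fin.cons_self_tail x, cons_mem_box] at hx
  exact hx.2

lemma rank_cons (a : ℕ) (x : Fin n → ℕ) : rank (Fin.cons a x : Fin (n + 1) → ℕ) = a + rank x :=
  Fin.sum_cons a x

lemma rank_eq_head_add_rank_tail (x : Fin (n + 1) → ℕ) : rank x = x 0 + rank (Fin.tail x) := by
  conv_lhs => rw [← Fin.cons_self_tail x]
  exact rank_cons _ _

lemma rank_eq_zero (x : Fin 0 → ℕ) : rank x = 0 := by simp [rank]

lemma rank_strictMono : StrictMono (rank : (Fin n → ℕ) → ℕ) := fun x y hxy => by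
  obtain ⟨hle, i, hi⟩ := Pi.lt_def.1 hxy
  exact sum_lt_sum (fun i _ => hle i) ⟨i, mem_univ i, hi⟩

lemma isAntichain_layer (s n k : ℕ) : IsAntichain (· ≤ ·) (layer s n k : Set (Fin n → ℕ)) :=
  fun x hx y hy hne hle => by
    simp only [layer, coe_filter, Set.mem_ofPred_eq] at hx hy
    exact (rank_strictMono (lt_of_le_of_ne hle hne)).ne (hx.2.trans hy.2.symm)

/-- A symmetric chain decomposition of `box s n`: the chain through `x` consists of the points
`chain x k`, of rank `k`, for `low x ≤ k ≤ n * s - low x`. -/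
structure SymmChainDecomp (s n : ℕ) where
  chain : (Fin n → ℕ) → ℕ → Fin n → ℕ
  low : (Fin n → ℕ) → ℕ
  low_le_rank : ∀ x ∈ box s n, low x ≤ rank x
  rank_add_low_le : ∀ x ∈ box s n, rank x + low x ≤ n * s
  chain_rank : ∀ x ∈ box s n, chain x (rank x) = x
  chain_mem_box : ∀ x ∈ box s n, ∀ k, low x ≤ k → k + low x ≤ n * s → chain x k ∈ box s n
  rank_chain : ∀ x ∈ box s n, ∀ k, low x ≤ k → k + low x ≤ n * s → rank (chain x k) = k
  chain_chain : ∀ x ∈ box s n, ∀ k, low x ≤ k → k + low x ≤ n * s → chain (chain x k) = chain x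
  low_chain : ∀ x ∈ box s n, ∀ k, low x ≤ k → k + low x ≤ n * s → low (chain x k) = low x
  chain_mono : ∀ x ∈ box s n, ∀ k l, low x ≤ k → k ≤ l → l + low x ≤ n * s →
    chain x k ≤ chain x l

namespace SymmChainDecomp

def zero (s : ℕ) : SymmChainDecomp s 0 where
  chain x _ := x
  low _ := 0
  low_le_rank _ _ := Nat.zero_le _
  rank_add_low_le x _ := by simp [rank_eq_zero]
  chain_rank _ _ := rfl
  chain_mem_box _ hx _ _ _ := hx
  rank_chain x _ k _ hk := by simp_all [rank_eq_zero]
  chain_chain _ _ _ _ _ := rfl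
  low_chain _ _ _ _ _ := rfl
  chain_mono _ _ _ _ _ _ _ := le_rfl

section succ

variable (D : SymmChainDecomp s n)

/-- The product `[0, s] × c` of `[0, s]` with the chain `c` of `D` through `tail x`, indexed by rank
from `low` to `n * s - low`, is the union over `t` of the symmetric chains
`[0, s - t] × {c (low + t)} ∪ {s - t} × c [low + t, n * s - low]`; `x` lies on the one with
`t = succIndex x`. -/
def succIndex (x : Fin (n + 1) → ℕ) : ℕ :=
  min (rank (Fin.tail x) - D.low (Fin.tail x)) (s - x 0)

def succLow (x : Fin (n + 1) → ℕ) : ℕ := D.low (Fin.tail x) + D.succIndex x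

def succSplit (x : Fin (n + 1) → ℕ) (k : ℕ) : ℕ := max (D.succLow x) (k + D.succIndex x - s)

def succChain (x : Fin (n + 1) → ℕ) (k : ℕ) : Fin (n + 1) → ℕ :=
  Fin.cons (k - D.succSplit x k) (D.chain (Fin.tail x) (D.succSplit x k))

variable {D} {x : Fin (n + 1) → ℕ}

lemma succSplit_bounds (hx : x ∈ box s (n + 1)) {k : ℕ} (hk : D.succLow x ≤ k)
    (hk' : k + D.succLow x ≤ (n + 1) * s) :
    D.low (Fin.tail x) ≤ D.succSplit x k ∧ D.succSplit x k + D.low (Fin.tail x) ≤ n * s ∧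
      D.succSplit x k ≤ k ∧ k - D.succSplit x k ≤ s := by
  have := D.low_le_rank _ (tail_mem_box hx)
  have := D.rank_add_low_le _ (tail_mem_box hx)
  rw [Nat.succ_mul] at hk'
  simp only [succSplit, succLow, succIndex] at *
  refine ⟨?_, ?_, ?_, ?_⟩ <;> omega

lemma succLow_le_rank (hx : x ∈ box s (n + 1)) : D.succLow x ≤ rank x := by
  have := D.low_le_rank _ (tail_mem_box hx)
  rw [rank_eq_head_add_rank_tail]
  simp only [succLow, succIndex]
  omega

lemma rank_add_succLow_le (hx : x ∈ box s (n + 1)) : rank x + D.succLow x ≤ (n + 1) * s := by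
  have := D.rank_add_low_le _ (tail_mem_box hx)
  have := mem_box.1 hx 0
  rw [rank_eq_head_add_rank_tail, Nat.succ_mul]
  simp only [succLow, succIndex]
  omega

lemma succSplit_rank (hx : x ∈ box s (n + 1)) : D.succSplit x (rank x) = rank (Fin.tail x) := by
  have := D.low_le_rank _ (tail_mem_box hx)
  have := mem_box.1 hx 0
  rw [rank_eq_head_add_rank_tail]
  simp only [succSplit, succLow, succIndex]
  omega

lemma succChain_rank (hx : x ∈ box s (n + 1)) : D.succChain x (rank x) = x := by
  rw [succChain, succSplit_rank hx, D.chain_rank _ (tail_mem_box hx), rank_eq_head_add_rank_tail,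
    Nat.add_sub_cancel, Fin.cons_self_tail]

lemma succChain_mem_box (hx : x ∈ box s (n + 1)) {k : ℕ} (hk : D.succLow x ≤ k)
    (hk' : k + D.succLow x ≤ (n + 1) * s) : D.succChain x k ∈ box s (n + 1) := by
  obtain ⟨h₁, h₂, -, h₄⟩ := succSplit_bounds hx hk hk'
  exact cons_mem_box.2 ⟨by omega, D.chain_mem_box _ (tail_mem_box hx) _ h₁ h₂⟩

lemma rank_succChain (hx : x ∈ box s (n + 1)) {k : ℕ} (hk : D.succLow x ≤ k)
    (hk' : k + D.succLow x ≤ (n + 1) * s) : rank (D.succChain x k) = k := by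
  obtain ⟨h₁, h₂, h₃, -⟩ := succSplit_bounds hx hk hk'
  rw [succChain, rank_cons, D.rank_chain _ (tail_mem_box hx) _ h₁ h₂]
  omega

lemma succIndex_succChain (hx : x ∈ box s (n + 1)) {k : ℕ} (hk : D.succLow x ≤ k)
    (hk' : k + D.succLow x ≤ (n + 1) * s) : D.succIndex (D.succChain x k) = D.succIndex x := by
  obtain ⟨h₁, h₂, -, -⟩ := succSplit_bounds hx hk hk'
  rw [succIndex, succChain, Fin.tail_cons, Fin.cons_zero,
    D.rank_chain _ (tail_mem_box hx) _ h₁ h₂, D.low_chain _ (tail_mem_box hx) _ h₁ h₂]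
  have := D.low_le_rank _ (tail_mem_box hx)
  simp only [succSplit, succLow, succIndex] at *
  omega

lemma succLow_succChain (hx : x ∈ box s (n + 1)) {k : ℕ} (hk : D.succLow x ≤ k)
    (hk' : k + D.succLow x ≤ (n + 1) * s) : D.succLow (D.succChain x k) = D.succLow x := by
  obtain ⟨h₁, h₂, -, -⟩ := succSplit_bounds hx hk hk'
  rw [succLow, succIndex_succChain hx hk hk', succChain, Fin.tail_cons,
    D.low_chain _ (tail_mem_box hx) _ h₁ h₂, succLow]

lemma succChain_succChain (hx : x ∈ box s (n + 1)) {k : ℕ} (hk : D.succLow x ≤ k)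
    (hk' : k + D.succLow x ≤ (n + 1) * s) : D.succChain (D.succChain x k) = D.succChain x := by
  obtain ⟨h₁, h₂, -, -⟩ := succSplit_bounds hx hk hk'
  have hsplit : D.succSplit (D.succChain x k) = D.succSplit x := by
    ext l
    rw [succSplit, succSplit, succLow_succChain hx hk hk', succIndex_succChain hx hk hk']
  have htail : Fin.tail (D.succChain x k) = D.chain (Fin.tail x) (D.succSplit x k) :=
    Fin.tail_cons _ _
  generalize D.succChain x k = y at hsplit htail ⊢
  ext l : 1
  simp only [succChain, hsplit, htail, D.chain_chain _ (tail_mem_box hx) _ h₁ h₂]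

lemma succChain_mono (hx : x ∈ box s (n + 1)) {k l : ℕ} (hk : D.succLow x ≤ k) (hkl : k ≤ l)
    (hl : l + D.succLow x ≤ (n + 1) * s) : D.succChain x k ≤ D.succChain x l := by
  obtain ⟨hk₁, -, -, -⟩ := succSplit_bounds hx hk (by omega)
  obtain ⟨-, hl₂, -, -⟩ := succSplit_bounds hx (hk.trans hkl) hl
  have hsplit : D.succSplit x k ≤ D.succSplit x l := by simp only [succSplit]; omega
  refine Fin.cons_le_cons.2 ⟨?_, D.chain_mono _ (tail_mem_box hx) _ _ hk₁ hsplit hl₂⟩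
  simp only [succSplit] at *
  omega

variable (D) in
def succ : SymmChainDecomp s (n + 1) where
  chain := D.succChain
  low := D.succLow
  low_le_rank _ := succLow_le_rank
  rank_add_low_le _ := rank_add_succLow_le
  chain_rank _ := succChain_rank
  chain_mem_box _ hx _ := succChain_mem_box hx
  rank_chain _ hx _ := rank_succChain hx
  chain_chain _ hx _ := succChain_succChain hx
  low_chain _ hx _ := succLow_succChain hx
  chain_mono _ hx _ _ := succChain_mono hx

end succ

variable {x y : Fin n → ℕ}

lemma le_or_le_of_chain_eq (D : SymmChainDecomp s n) (hx : x ∈ box s n) (hy : y ∈ box s n) {k : ℕ}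
    (hkx : D.low x ≤ k) (hkx' : k + D.low x ≤ n * s)
    (hky : D.low y ≤ k) (hky' : k + D.low y ≤ n * s) (h : D.chain x k = D.chain y k) :
    x ≤ y ∨ y ≤ x := by
  wlog hxy : rank x ≤ rank y generalizing x y
  · exact (this hy hx hky hky' hkx hkx' h.symm (by omega)).symm
  have hchain : D.chain x = D.chain y := by
    rw [← D.chain_chain x hx k hkx hkx', h, D.chain_chain y hy k hky hky']
  have hlow : D.low x = D.low y := by
    rw [← D.low_chain x hx k hkx hkx', h, D.low_chain y hy k hky hky']
  left
  calc x = D.chain x (rank x) := (D.chain_rank x hx).symm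
    _ ≤ D.chain x (rank y) :=
      D.chain_mono x hx _ _ (D.low_le_rank x hx) hxy (hlow ▸ D.rank_add_low_le y hy)
    _ = y := by rw [hchain, D.chain_rank y hy]

lemma low_le_middle (D : SymmChainDecomp s n) (hx : x ∈ box s n) :
    D.low x ≤ n * s / 2 ∧ n * s / 2 + D.low x ≤ n * s := by
  have := D.low_le_rank x hx
  have := D.rank_add_low_le x hx
  omega

theorem card_le_card_middleLayer (D : SymmChainDecomp s n) {A : Finset (Fin n → ℕ)}
    (hA : A ⊆ box s n) (hanti : IsAntichain (· ≤ ·) (A : Set (Fin n → ℕ))) :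
    #A ≤ #(middleLayer s n) := by
  refine card_le_card_of_injOn (D.chain · (n * s / 2)) (fun x hx => ?_) (fun x hx y hy h => ?_)
  · obtain ⟨h₁, h₂⟩ := D.low_le_middle (hA hx)
    exact mem_filter.2 ⟨D.chain_mem_box x (hA hx) _ h₁ h₂, D.rank_chain x (hA hx) _ h₁ h₂⟩
  · obtain ⟨hx₁, hx₂⟩ := D.low_le_middle (hA hx)
    obtain ⟨hy₁, hy₂⟩ := D.low_le_middle (hA hy)
    exact (D.le_or_le_of_chain_eq (hA hx) (hA hy) hx₁ hx₂ hy₁ hy₂ h).elim (hanti.eq hx hy)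
      fun h => (hanti.eq hy hx h).symm

end SymmChainDecomp

def symmChainDecomp (s : ℕ) : (n : ℕ) → SymmChainDecomp s n
  | 0 => .zero s
  | n + 1 => (symmChainDecomp s n).succ

lemma Icc_one_eq_map_box (s n : ℕ) :
    Icc 1 (fun _ => s + 1) = (box s n).map (addRightEmbedding 1) := by
  rw [box, map_add_right_Icc, zero_add]
  rfl

theorem maxAntichainSize_succ (s n : ℕ) : maxAntichainSize (s + 1) n = #(middleLayer s n) := by
  let shift : (Fin n → ℕ) ↪o (Fin n → ℕ) :=
    OrderEmbedding.ofMapLEIff (· + 1) fun _ _ => add_le_add_iff_right 1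
  have hsizes : {k | ∃ A : Finset (Fin n → ℕ), A ⊆ Icc 1 (fun _ => s + 1) ∧
      IsAntichain (· ≤ ·) (A : Set (Fin n → ℕ)) ∧ #A = k} =
      {k | ∃ B ⊆ box s n, IsAntichain (· ≤ ·) (B : Set (Fin n → ℕ)) ∧ #B = k} := by
    ext k
    simp only [Icc_one_eq_map_box, subset_map_iff]
    constructor
    · rintro ⟨_, ⟨B, hB, rfl⟩, hanti, rfl⟩
      rw [coe_map] at hanti
      exact ⟨B, hB, IsAntichain.image_embedding_iff.1 (show IsAntichain _ (shift '' B) from hanti),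
        (card_map _).symm⟩
    · rintro ⟨B, hB, hanti, rfl⟩
      refine ⟨_, ⟨B, hB, rfl⟩, ?_, card_map _⟩
      rw [coe_map]
      exact hanti.image_embedding shift
  rw [maxAntichainSize, hsizes]
  exact IsGreatest.csSup_eq ⟨⟨middleLayer s n, filter_subset _ _, isAntichain_layer _ _ _, rfl⟩,
    by rintro _ ⟨B, hB, hanti, rfl⟩; exact (symmChainDecomp s n).card_le_card_middleLayer hB hanti⟩

lemma layer_eq_filter_piAntidiag (s n k : ℕ) :
    layer s n k = {x ∈ piAntidiag (univ : Finset (Fin n)) k | ∀ i, x i ≤ s} := by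
  ext x
  rw [layer, mem_filter, mem_filter, mem_box, mem_piAntidiag]
  simp [rank, and_comm]

lemma card_filter_piAntidiag_forall_lt (s k : ℕ) (T : Finset (Fin n)) :
    #{x ∈ piAntidiag (univ : Finset (Fin n)) k | ∀ i ∈ T, s < x i} =
      if #T * (s + 1) ≤ k then (n + (k - #T * (s + 1)) - 1).choose (k - #T * (s + 1)) else 0 := by
  split_ifs with hk
  · let e : Fin n → ℕ := fun i => if i ∈ T then s + 1 else 0
    have he : ∑ i, e i = #T * (s + 1) := by simp [e, sum_ite_mem]
    have hfilter : {x ∈ piAntidiag (univ : Finset (Fin n)) k | ∀ i ∈ T, s < x i} =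
        {x ∈ piAntidiag (univ : Finset (Fin n)) (k - #T * (s + 1) + ∑ i, e i) |
          ∀ i, e i ≤ x i} := by
      rw [he, Nat.sub_add_cancel hk]
      refine filter_congr fun x _ => ⟨fun h i => ?_, fun h i hi => by simpa [e, hi] using h i⟩
      by_cases hi : i ∈ T <;> simp [e, hi, h]
    have key := card_filter_le_piAntidiag_univ e (k - #T * (s + 1))
    rw [card_piAntidiag_univ, Fintype.card_fin] at key
    rw [hfilter]
    convert key
  · refine card_eq_zero.2 (filter_eq_empty_iff.2 fun x hx hlt => hk ?_)
    calc #T * (s + 1) = ∑ i ∈ T, (s + 1) := by rw [sum_const, smul_eq_mul]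
      _ ≤ ∑ i ∈ T, x i := sum_le_sum hlt
      _ ≤ ∑ i, x i := sum_le_sum_of_subset (subset_univ T)
      _ = k := by simpa [mem_piAntidiag] using hx

theorem card_layer (s n k : ℕ) :
    (#(layer s n k) : ℤ) = ∑ j ∈ range (n + 1), (-1) ^ j * n.choose j *
      if j * (s + 1) ≤ k then ((n + (k - j * (s + 1)) - 1).choose (k - j * (s + 1)) : ℤ)
      else 0 := by
  set P := piAntidiag (univ : Finset (Fin n)) k
  calc (#(layer s n k) : ℤ)
      = ∑ x ∈ P, ∑ T ∈ ({i | s < x i} : Finset (Fin n)).powerset, (-1 : ℤ) ^ #T := by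
        rw [layer_eq_filter_piAntidiag, card_filter, Nat.cast_sum]
        refine sum_congr rfl fun x _ => ?_
        rw [sum_powerset_neg_one_pow_card]
        simp [filter_eq_empty_iff]
    _ = ∑ T ∈ univ.powerset, ∑ x ∈ {x ∈ P | ∀ i ∈ T, s < x i}, (-1 : ℤ) ^ #T :=
        sum_comm' fun x T => by simp [subset_iff, and_comm]
    _ = ∑ T ∈ univ.powerset, (-1) ^ #T * (#{x ∈ P | ∀ i ∈ T, s < x i} : ℤ) := by
        simp [sum_const, mul_comm]
    _ = _ := by
        simp only [card_filter_piAntidiag_forall_lt, P]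
        rw [sum_powerset_apply_card (fun j => (-1 : ℤ) ^ j * ((if j * (s + 1) ≤ k then
          (n + (k - j * (s + 1)) - 1).choose (k - j * (s + 1)) else 0 : ℕ) : ℤ))]
        simp only [nsmul_eq_mul, Nat.cast_ite, Nat.cast_zero, card_fin]
        refine sum_congr rfl fun j _ => ?_
        split_ifs <;> ring

lemma card_middleLayer_five {s : ℕ} (hs : 5 ≤ s) :
    (#(middleLayer s 5) : ℝ) =
      ∑ j ∈ range 3,
        (-1) ^ j * (5 : ℕ).choose j * ((5 * s / 2 - j * (s + 1) + 4).choose 4 : ℝ) := by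
  have h := card_layer s 5 (5 * s / 2)
  rw [← sum_subset (range_subset_range.2 (by norm_num : 3 ≤ 5 + 1)) fun j hj hj' => by
    simp only [mem_range] at hj hj'
    rw [if_neg (by interval_cases j <;> omega), mul_zero]] at h
  rw [sum_congr rfl fun j hj => by
    simp only [mem_range] at hj
    rw [if_pos (by interval_cases j <;> omega),
      show 5 + (5 * s / 2 - j * (s + 1)) - 1 = 5 * s / 2 - j * (s + 1) + 4 by omega,
      Nat.choose_symm_add]] at h
  exact_mod_cast h

end Grid

/-- `S(m,5)/m⁴ → 115/192` as `m → ∞`. -/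
theorem max_antichain_five_limit :
    Tendsto (fun m : ℕ => (maxAntichainSize m 5 : ℝ) / (m : ℝ) ^ 4) atTop
      (nhds (115 / 192)) := by
  have hterm : ∀ j ∈ range 3, Tendsto (fun m : ℕ => (-1 : ℝ) ^ j * (5 : ℕ).choose j *
      (((5 * (m - 1) / 2 - j * m + 4).choose 4 : ℝ) / m ^ 4)) atTop
      (𝓝 ((-1 : ℝ) ^ j * (5 : ℕ).choose j * ((5 / 2 - j) ^ 4 / 4 !))) := fun j hj =>
    ((tendsto_cast_choose_div_pow 4
      (tendsto_five_mul_pred_div_two_sub_mul_div (mem_range.1 hj))).const_mul _)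
  have hsum := tendsto_finsetSum _ hterm
  rw [show ∑ j ∈ range 3, (-1 : ℝ) ^ j * ((5 : ℕ).choose j : ℝ) * ((5 / 2 - j) ^ 4 / 4 !) =
    115 / 192 by norm_num [sum_range_succ, Nat.factorial, Nat.choose]] at hsum
  refine hsum.congr' ?_
  filter_upwards [eventually_ge_atTop 6] with m hm
  obtain ⟨s, rfl⟩ : ∃ s, m = s + 1 := ⟨m - 1, by omega⟩
  rw [Grid.maxAntichainSize_succ, Grid.card_middleLayer_five (by omega), sum_div]
  simp only [Nat.add_sub_cancel, mul_div_assoc]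
end
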